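/- arXiv:2111.06308 — 10 statements merged into one kernel-verified Lean document; each statement's English description precedes it below -/
import Mathlib

section
/- Let A be an n×T real matrix with all entries in [-1,1], and let x ∈ [-1,1]^T. Then there exists y ∈ [-1,1]^T such that A·y = A·x and the set of indices i with -1 < y_i < 1 has cardinality at most n. -/
open Finset

private lemma bg_step (n T : ℕ) (A : Matrix (Fin n) (Fin T) ℝ) (x : Fin T → ℝ)
    (hx : ∀ i, |x i| ≤ 1) (hbig : n < {i : Fin T | -1 < x i ∧ x i < 1}.ncard) :
    ∃ x' : Fin T → ℝ, (∀ i, |x' i| ≤ 1) ∧ A.mulVec x' = A.mulVec x ∧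
      {i : Fin T | -1 < x' i ∧ x' i < 1}.ncard < {i : Fin T | -1 < x i ∧ x i < 1}.ncard := by
  classical
  set S : Finset (Fin T) := Finset.univ.filter (fun i => -1 < x i ∧ x i < 1) with hS
  have hset : {i : Fin T | -1 < x i ∧ x i < 1} = ↑S := by
    ext i; simp [hS]
  have hcard : n < S.card := by
    rwa [hset, Set.ncard_coe_finset] at hbig
  -- columns of A restricted to S are linearly dependent
  have hnli : ¬ LinearIndependent ℝ (fun i : S => (fun r => A r i : Fin n → ℝ)) := by
    intro hli
    have := hli.fintype_card_le_finrank
    rw [Module.finrank_fin_fun, Fintype.card_coe] at this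
    omega
  rw [Fintype.not_linearIndependent_iff] at hnli
  obtain ⟨g, hg0, i₁, hi₁⟩ := hnli
  set z : Fin T → ℝ := fun i => if h : i ∈ S then g ⟨i, h⟩ else 0 with hz
  have hzero : A.mulVec z = 0 := by
    funext r
    have h1 : A.mulVec z r = ∑ j ∈ S, A r j * z j := by
      rw [Matrix.mulVec, dotProduct]
      refine (Finset.sum_subset (Finset.subset_univ S) ?_).symm
      intro j _ hj
      simp [hz, hj]
    rw [h1]
    have h2 : ∑ j ∈ S, A r j * z j = ∑ j ∈ S.attach, g j * A r j := by
      rw [← Finset.sum_attach S (fun j => A r j * z j)]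
      refine Finset.sum_congr rfl ?_
      intro j _
      simp [hz, j.2, mul_comm]
    rw [h2]
    have := congrFun hg0 r
    simpa using this
  -- support of z inside S
  set P : Finset (Fin T) := S.filter (fun i => z i ≠ 0) with hP
  have hPne : P.Nonempty := by
    refine ⟨(i₁ : Fin T), ?_⟩
    simp only [hP, Finset.mem_filter]
    refine ⟨i₁.2, ?_⟩
    simp [hz, i₁.2, hi₁]
  set f : Fin T → ℝ := fun i => if 0 < z i then (1 - x i) / z i else (-1 - x i) / z i with hf
  have hfpos : ∀ i ∈ P, 0 < f i := by
    intro i hi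
    simp only [hP, Finset.mem_filter, hS, Finset.mem_filter] at hi
    obtain ⟨⟨-, hx1, hx2⟩, hzi⟩ := hi
    by_cases h : 0 < z i
    · simp only [hf, if_pos h]
      exact div_pos (by linarith) h
    · have hneg : z i < 0 := lt_of_le_of_ne (not_lt.mp h) hzi
      simp only [hf, if_neg h]
      exact div_pos_of_neg_of_neg (by linarith) hneg
  set t : ℝ := P.inf' hPne f with ht
  have htpos : 0 < t := by
    rw [ht, Finset.lt_inf'_iff]
    exact hfpos
  have htle : ∀ i ∈ P, t ≤ f i := fun i hi => Finset.inf'_le f hi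
  obtain ⟨i₀, hi₀P, hi₀⟩ := Finset.exists_mem_eq_inf' hPne f
  set y : Fin T → ℝ := fun i => x i + t * z i with hy
  -- bounds on y
  have hzout : ∀ i, i ∉ S → z i = 0 := by intro i hi; simp [hz, hi]
  have hybound : ∀ i, |y i| ≤ 1 := by
    intro i
    by_cases hiS : i ∈ S
    · have hxi : -1 < x i ∧ x i < 1 := by
        simpa [hS] using hiS
      rcases lt_trichotomy (z i) 0 with hneg | h0 | hpos
      · have hiP : i ∈ P := by simp [hP, hiS, hneg.ne]
        have hfi : f i = (-1 - x i) / z i := if_neg (not_lt.mpr hneg.le)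
        have : t ≤ (-1 - x i) / z i := hfi ▸ htle i hiP
        have h1 : -1 - x i ≤ t * z i := by
          rwa [le_div_iff_of_neg hneg] at this
        have h2 : t * z i < 0 := mul_neg_of_pos_of_neg htpos hneg
        rw [abs_le]
        constructor <;> [skip; skip] <;> simp only [hy] <;> nlinarith [hxi.1, hxi.2]
      · simp [hy, h0, abs_le]
        constructor <;> linarith [hxi.1, hxi.2]
      · have hiP : i ∈ P := by simp [hP, hiS, hpos.ne']
        have hfi : f i = (1 - x i) / z i := if_pos hpos
        have : t ≤ (1 - x i) / z i := hfi ▸ htle i hiP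
        have h1 : t * z i ≤ 1 - x i := by
          rwa [le_div_iff₀ hpos] at this
        have h2 : 0 < t * z i := mul_pos htpos hpos
        rw [abs_le]
        constructor <;> simp only [hy] <;> nlinarith [hxi.1, hxi.2]
    · simp only [hy, hzout i hiS, mul_zero, add_zero]
      exact hx i
  -- y i₀ hits the boundary
  have hi₀S : i₀ ∈ S := (Finset.mem_filter.mp hi₀P).1
  have hi₀z : z i₀ ≠ 0 := (Finset.mem_filter.mp hi₀P).2
  have hyi₀ : y i₀ = 1 ∨ y i₀ = -1 := by
    rcases lt_or_gt_of_ne hi₀z with hneg | hpos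
    · right
      have hti : t = f i₀ := hi₀
      have : t = (-1 - x i₀) / z i₀ := hti.trans (if_neg (not_lt.mpr hneg.le))
      simp only [hy, this]
      field_simp
      ring
    · left
      have hti : t = f i₀ := hi₀
      have : t = (1 - x i₀) / z i₀ := hti.trans (if_pos hpos)
      simp only [hy, this]
      field_simp
      ring
  -- fractional set decreases
  refine ⟨y, hybound, ?_, ?_⟩
  · have : A.mulVec y = A.mulVec x + t • A.mulVec z := by
      have : y = x + t • z := by funext i; simp [hy, smul_eq_mul]
      rw [this, Matrix.mulVec_add, Matrix.mulVec_smul]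
    rw [this, hzero, smul_zero, add_zero]
  · have hsub : {i : Fin T | -1 < y i ∧ y i < 1} ⊆ {i : Fin T | -1 < x i ∧ x i < 1} \ {i₀} := by
      intro i ⟨h1, h2⟩
      constructor
      · by_contra hiS
        have hiS' : i ∉ S := by simpa [hset] using hiS
        have hyx : y i = x i := by simp [hy, hzout i hiS']
        rw [hyx] at h1 h2
        exact hiS ⟨h1, h2⟩
      · intro hii
        simp only [Set.mem_singleton_iff] at hii
        subst hii
        rcases hyi₀ with h | h <;> rw [h] at h1 h2 <;> linarith
    calc {i : Fin T | -1 < y i ∧ y i < 1}.ncard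
        ≤ ({i : Fin T | -1 < x i ∧ x i < 1} \ {i₀}).ncard :=
          Set.ncard_le_ncard hsub (Set.toFinite _)
      _ < {i : Fin T | -1 < x i ∧ x i < 1}.ncard := by
          apply Set.ncard_diff_singleton_lt_of_mem
          · simpa [hset] using hi₀S
          · exact Set.toFinite _

private lemma bg_aux (n T : ℕ) (A : Matrix (Fin n) (Fin T) ℝ) :
    ∀ k (x : Fin T → ℝ), (∀ i, |x i| ≤ 1) → {i : Fin T | -1 < x i ∧ x i < 1}.ncard ≤ k →
    ∃ y : Fin T → ℝ, (∀ i, |y i| ≤ 1) ∧ A.mulVec y = A.mulVec x ∧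
      {i : Fin T | -1 < y i ∧ y i < 1}.ncard ≤ n := by
  intro k
  induction k with
  | zero => intro x hx h; exact ⟨x, hx, rfl, h.trans (Nat.zero_le n)⟩
  | succ k ih =>
    intro x hx h
    by_cases hle : {i : Fin T | -1 < x i ∧ x i < 1}.ncard ≤ n
    · exact ⟨x, hx, rfl, hle⟩
    push_neg at hle
    obtain ⟨x', hx', hAx', hlt⟩ := bg_step n T A x hx hle
    obtain ⟨y, hy, hAy, hycard⟩ := ih x' hx' (by omega)
    exact ⟨y, hy, hAy.trans hAx', hycard⟩

/-- **Bárány–Grinberg rounding lemma.** For an `n × T` matrix `A` with entries in `[-1,1]`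
and any `x ∈ [-1,1]^T`, there is `y ∈ [-1,1]^T` with `A·y = A·x` and at most `n`
coordinates of `y` strictly inside `(-1,1)`. -/
theorem stmt0 (n T : ℕ) (A : Matrix (Fin n) (Fin T) ℝ)
    (hA : ∀ i j, |A i j| ≤ 1) (x : Fin T → ℝ) (hx : ∀ i, |x i| ≤ 1) :
    ∃ y : Fin T → ℝ, (∀ i, |y i| ≤ 1) ∧ A.mulVec y = A.mulVec x ∧
      {i : Fin T | -1 < y i ∧ y i < 1}.ncard ≤ n := by
  exact bg_aux n T A ({i : Fin T | -1 < x i ∧ x i < 1}.ncard) x hx le_rfl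
end

section
/- Let G = (V,E) be a finite undirected graph with m edges and n vertices that is a φ-expander (for all S ⊆ V, |E(S, V∖S)| ≥ φ·min(vol(S), vol(V∖S))) and γ-weakly-regular (every vertex has degree at least γ·2m/n). Then for any orientation of the edges that is a local optimum of local search (i.e., no directed edge (u,v) satisfies disc(v) > disc(u) + 2, where disc(w) = indeg(w) − outdeg(w)), the maximum of |disc(v)| over all vertices v is O(log(m)/(φγ)). -/
open Finset

/-- In-degree of `v` in the directed graph with edge set `D`. -/
def inDeg {V : Type*} [DecidableEq V] (D : Finset (V × V)) (v : V) : ℕ :=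
  (D.filter (fun e => e.2 = v)).card

/-- Out-degree of `v`. -/
def outDeg {V : Type*} [DecidableEq V] (D : Finset (V × V)) (v : V) : ℕ :=
  (D.filter (fun e => e.1 = v)).card

/-- Discrepancy of a vertex: in-degree minus out-degree. -/
def disc {V : Type*} [DecidableEq V] (D : Finset (V × V)) (v : V) : ℤ :=
  (inDeg D v : ℤ) - (outDeg D v : ℤ)

/-- (Undirected) degree of `v`. -/
def deg {V : Type*} [DecidableEq V] (D : Finset (V × V)) (v : V) : ℕ :=
  inDeg D v + outDeg D v

/-- Volume of a vertex set: sum of degrees. -/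
def vol {V : Type*} [DecidableEq V] (D : Finset (V × V)) (S : Finset V) : ℕ :=
  ∑ v ∈ S, deg D v

/-- Number of (undirected) edges crossing the cut `(S, V∖S)`. -/
def cut {V : Type*} [DecidableEq V] (D : Finset (V × V)) (S : Finset V) : ℕ :=
  (D.filter (fun e => (e.1 ∈ S ∧ e.2 ∉ S) ∨ (e.1 ∉ S ∧ e.2 ∈ S))).card

namespace LS
set_option linter.unusedSectionVars false
variable {V : Type*} [Fintype V] [DecidableEq V]

def into (D : Finset (V × V)) (S : Finset V) : ℕ :=
  (D.filter (fun e => e.1 ∉ S ∧ e.2 ∈ S)).card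
def outof (D : Finset (V × V)) (S : Finset V) : ℕ :=
  (D.filter (fun e => e.1 ∈ S ∧ e.2 ∉ S)).card

lemma sum_inDeg (D : Finset (V × V)) (S : Finset V) :
    ∑ v ∈ S, inDeg D v = (D.filter (fun e => e.2 ∈ S)).card := by
  rw [Finset.card_eq_sum_card_fiberwise (f := Prod.snd) (s := D.filter (fun e => e.2 ∈ S)) (t := S)
    (fun e he => (mem_filter.mp he).2)]
  apply Finset.sum_congr rfl
  intro v hv
  rw [inDeg, Finset.filter_filter]
  congr 1
  apply Finset.filter_congr
  intro e _
  constructor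
  · exact fun h => ⟨h ▸ hv, h⟩
  · exact fun h => h.2

lemma sum_outDeg (D : Finset (V × V)) (S : Finset V) :
    ∑ v ∈ S, outDeg D v = (D.filter (fun e => e.1 ∈ S)).card := by
  rw [Finset.card_eq_sum_card_fiberwise (f := Prod.fst) (s := D.filter (fun e => e.1 ∈ S)) (t := S)
    (fun e he => (mem_filter.mp he).2)]
  apply Finset.sum_congr rfl
  intro v hv
  rw [outDeg, Finset.filter_filter]
  congr 1
  apply Finset.filter_congr
  intro e _
  constructor
  · exact fun h => ⟨h ▸ hv, h⟩
  · exact fun h => h.2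

lemma vol_univ (D : Finset (V × V)) : vol D univ = 2 * D.card := by
  have h1 := sum_inDeg D (univ : Finset V)
  have h2 := sum_outDeg D (univ : Finset V)
  simp only [mem_univ] at h1 h2
  rw [vol]
  simp only [deg, Finset.sum_add_distrib, h1, h2, Finset.filter_true_of_mem (fun e (_ : e ∈ D) => trivial)]
  ring
lemma card_filter_split {α : Type*} (s : Finset α) (p q : α → Prop) [DecidablePred p] [DecidablePred q] :
    (s.filter q).card = (s.filter fun a => p a ∧ q a).card + (s.filter fun a => ¬ p a ∧ q a).card := by
  rw [← Finset.card_filter_add_card_filter_not (s := s.filter q) (p := p)]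
  congr 1 <;> rw [Finset.filter_filter] <;>
    exact congrArg Finset.card (Finset.filter_congr (fun x _ => by tauto))

lemma vol_compl (D : Finset (V × V)) (S : Finset V) : vol D S + vol D Sᶜ = 2 * D.card := by
  rw [vol, vol, Finset.sum_add_sum_compl, ← vol_univ D, vol]

lemma vol_mono (D : Finset (V × V)) {S T : Finset V} (h : S ⊆ T) : vol D S ≤ vol D T :=
  Finset.sum_le_sum_of_subset h

lemma flow (D : Finset (V × V)) (S : Finset V) :
    (∑ v ∈ S, disc D v) = (into D S : ℤ) - (outof D S : ℤ) := by
  have hin : (D.filter fun e => e.2 ∈ S).card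
      = (D.filter fun e => e.1 ∈ S ∧ e.2 ∈ S).card + into D S := by
    rw [into, card_filter_split D (fun e => e.1 ∈ S) (fun e => e.2 ∈ S)]
  have hout : (D.filter fun e => e.1 ∈ S).card
      = (D.filter fun e => e.1 ∈ S ∧ e.2 ∈ S).card + outof D S := by
    rw [outof, card_filter_split D (fun e => e.2 ∈ S) (fun e => e.1 ∈ S)]
    congr 1
    · exact congrArg Finset.card (Finset.filter_congr (fun x _ => by tauto))
    · exact congrArg Finset.card (Finset.filter_congr (fun x _ => by tauto))
  have h1 : (∑ v ∈ S, (inDeg D v : ℤ)) = ((D.filter fun e => e.2 ∈ S).card : ℤ) := by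
    exact_mod_cast congrArg (Nat.cast : ℕ → ℤ) (sum_inDeg D S)
  have h2 : (∑ v ∈ S, (outDeg D v : ℤ)) = ((D.filter fun e => e.1 ∈ S).card : ℤ) := by
    exact_mod_cast congrArg (Nat.cast : ℕ → ℤ) (sum_outDeg D S)
  simp only [disc, Finset.sum_sub_distrib, h1, h2]
  push_cast [hin, hout]
  ring

lemma cut_eq (D : Finset (V × V)) (S : Finset V) : cut D S = outof D S + into D S := by
  rw [cut, outof, into, Finset.filter_or]
  apply Finset.card_union_of_disjoint
  simp only [Finset.disjoint_filter]
  intro x _ h1 h2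
  exact h2.1 h1.1

lemma into_le (D : Finset (V × V)) {S T : Finset V} (hST : S ⊆ T)
    (h : ∀ e ∈ D, e.2 ∈ S → e.1 ∈ T) : into D S + vol D S ≤ vol D T := by
  have h1 : into D S ≤ ∑ v ∈ T \ S, outDeg D v := by
    rw [sum_outDeg]
    apply Finset.card_le_card
    intro e he
    simp only [mem_filter, mem_sdiff, into] at he ⊢
    exact ⟨he.1, h e he.1 he.2.2, he.2.1⟩
  have h2 : ∑ v ∈ T \ S, outDeg D v ≤ ∑ v ∈ T \ S, deg D v :=
    Finset.sum_le_sum (fun v _ => Nat.le_add_left _ _)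
  have h3 : ∑ v ∈ T \ S, deg D v + vol D S = vol D T := Finset.sum_sdiff hST
  omega


lemma ratio_step (φ δ M a a' : ℝ) (hφ : 0 < φ) (hδpos : 0 < δ)
    (ha0 : 0 ≤ a) (ha'0 : 0 ≤ a') (hmono : a ≤ a') (ha'M : a' ≤ 2*M)
    (hWδ : δ ≤ 2*M - a)
    (hs : φ * min a (2*M - a) ≤ 2*(a' - a)) :
    (1 + φ/4) * (a / (2*M - a + δ)) ≤ a' / (2*M - a' + δ) := by
  have hden1 : 0 < 2*M - a + δ := by linarith
  have hden2 : 0 < 2*M - a' + δ := by linarith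
  rw [← mul_div_assoc, div_le_div_iff₀ hden1 hden2]
  rcases le_or_gt a M with hc | hc
  · rw [min_eq_left (by linarith)] at hs
    have k1 : (1 + φ/4) * a ≤ a' := by nlinarith [mul_nonneg hφ.le ha0]
    have k2 : 2*M - a' + δ ≤ 2*M - a + δ := by linarith
    have g1 := mul_le_mul_of_nonneg_right k1 (le_of_lt hden2)
    have g2 := mul_le_mul_of_nonneg_left k2 ha'0
    linarith
  · rw [min_eq_right (by linarith)] at hs
    have k3 : 2*M - a' + δ ≤ (1 - φ/4) * (2*M - a + δ) := by
      nlinarith [mul_nonneg hφ.le (show (0:ℝ) ≤ (2*M - a) - δ by linarith)]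
    have k4 := mul_le_mul_of_nonneg_left k3
      (show (0:ℝ) ≤ (1 + φ/4) * a by nlinarith)
    have g1 := mul_le_mul_of_nonneg_right hmono (le_of_lt hden1)
    nlinarith [k4, g1, mul_nonneg (mul_nonneg (mul_nonneg hφ.le hφ.le) ha0) (le_of_lt hden1)]

set_option maxHeartbeats 1000000 in
lemma endgame (φ γ M N δ dr : ℝ) (i : ℕ)
    (hφ : 0 < φ) (hγ : 0 < γ) (hφ1 : φ ≤ 1) (hγ1 : γ ≤ 1)
    (hM1 : 1 ≤ M) (hN1 : 1 ≤ N) (hN2M : N ≤ 2*M)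
    (hδ : δ = γ * (2*M)/N) (hδpos : 0 < δ) (hδ2M : δ ≤ 2*M)
    (hchain : (1+φ/4)^i * (δ/(2*M+δ)) ≤ 2*M/δ)
    (hd2i : dr ≤ 2*(i:ℝ) + 2) :
    dr ≤ 1000 * Real.log (M+1) / (φ*γ) := by
  have hMpos : (0:ℝ) < M := by linarith
  have hNpos : (0:ℝ) < N := by linarith
  have hMδne : (2*M + δ) ≠ 0 := by linarith
  have hδne : δ ≠ 0 := ne_of_gt hδpos
  set P : ℝ := (1 + φ/4)^i with hP
  have hPpos : 0 < P := by rw [hP]; positivity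
  have hP2 : P * δ^2 ≤ 2*M*(2*M + δ) := by
    have h := mul_le_mul_of_nonneg_right hchain (show (0:ℝ) ≤ δ*(2*M+δ) by positivity)
    have e1 : P * (δ/(2*M+δ)) * (δ*(2*M+δ)) = P * δ^2 := by field_simp
    have e2 : (2*M/δ) * (δ*(2*M+δ)) = 2*M*(2*M+δ) := by field_simp
    rw [e1, e2] at h
    exact h
  have hP3 : P * δ^2 ≤ 8*M^2 := by nlinarith [hP2, hδ2M, hM1]
  have hP4 : P ≤ 8*M^2/δ^2 := by
    rw [le_div_iff₀ (pow_pos hδpos 2)]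
    exact hP3
  have hlogP : (i:ℝ) * Real.log (1 + φ/4) ≤ Real.log (8*M^2/δ^2) := by
    rw [← Real.log_pow]
    exact Real.log_le_log hPpos hP4
  have hlogδ : Real.log δ = Real.log γ + Real.log 2 + Real.log M - Real.log N := by
    rw [hδ, Real.log_div (by positivity) (ne_of_gt hNpos),
      Real.log_mul (ne_of_gt hγ) (by positivity),
      Real.log_mul (by norm_num) (ne_of_gt hMpos)]
    ring
  have hlog8 : Real.log (8*M^2/δ^2)
      = Real.log 8 + 2*Real.log M - 2*Real.log δ := by
    rw [Real.log_div (by positivity) (pow_ne_zero 2 hδne),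
      Real.log_mul (by norm_num) (by positivity), Real.log_pow, Real.log_pow]
    push_cast
    ring
  have hlog8' : Real.log 8 = 3 * Real.log 2 := by
    rw [show (8:ℝ) = 2^3 by norm_num, Real.log_pow]
    push_cast
    ring
  have hlogPle : (i:ℝ) * Real.log (1 + φ/4)
      ≤ Real.log 2 + 2*Real.log N - 2*Real.log γ := by
    rw [hlog8, hlog8', hlogδ] at hlogP
    linarith
  have hlogφ : φ/5 ≤ Real.log (1 + φ/4) := by
    have h := Real.log_le_sub_one_of_pos (show (0:ℝ) < (1 + φ/4)⁻¹ by positivity)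
    rw [Real.log_inv] at h
    have h3 : 1 - (1 + φ/4)⁻¹ = (φ/4)/(1 + φ/4) := by field_simp; ring
    have h4 : φ/5 ≤ (φ/4)/(1 + φ/4) := by
      rw [le_div_iff₀ (by positivity)]
      nlinarith
    linarith
  have hloggam : -Real.log γ ≤ γ⁻¹ - 1 := by
    have h := Real.log_le_sub_one_of_pos (show (0:ℝ) < γ⁻¹ by positivity)
    rw [Real.log_inv] at h
    exact h
  set Lg : ℝ := Real.log (M + 1) with hLg
  have hLgpos : 0 < Lg := Real.log_pos (by linarith)
  have hlog2M : Real.log 2 ≤ Lg := Real.log_le_log (by norm_num) (by linarith)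
  have hlogN : Real.log N ≤ 2*Lg := by
    have hNle : N ≤ (M + 1)^2 := by nlinarith
    calc Real.log N ≤ Real.log ((M+1)^2) := Real.log_le_log hNpos hNle
      _ = 2*Lg := by rw [Real.log_pow, hLg]; push_cast; ring
  have hlog2half : (1/2:ℝ) ≤ Real.log 2 := by
    have := Real.log_two_gt_d9
    linarith
  have k1 : (i:ℝ) * φ ≤ 5*(Real.log 2 + 2*Real.log N - 2*Real.log γ) := by
    have h := le_trans (mul_le_mul_of_nonneg_left hlogφ (Nat.cast_nonneg i)) hlogPle
    linarith
  have k2 : (i:ℝ) * φ * γ ≤ 5*(γ*Real.log 2 + 2*(γ*Real.log N) + 2*(γ*(-Real.log γ))) := by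
    have h := mul_le_mul_of_nonneg_right k1 hγ.le
    nlinarith [h]
  have hlogN0 : 0 ≤ Real.log N := Real.log_nonneg hN1
  have f1 : γ*Real.log N ≤ 2*Lg := by nlinarith [hlogN, hγ1, hγ.le, hlogN0]
  have f2 : γ*Real.log 2 ≤ Lg := by nlinarith [hlog2M, hγ1, hγ.le, hlog2half]
  have f3 : γ*(-Real.log γ) ≤ 1 := by
    have h := mul_le_mul_of_nonneg_left hloggam hγ.le
    have e : γ*(γ⁻¹ - 1) = 1 - γ := by field_simp
    rw [e] at h
    linarith
  have k3 : (i:ℝ)*φ*γ ≤ 25*Lg + 10 := by linarith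
  have k4 : (i:ℝ)*φ*γ ≤ 45*Lg := by linarith [hlog2half, hlog2M]
  have hφγ : 0 < φ*γ := mul_pos hφ hγ
  rw [le_div_iff₀ hφγ]
  have h5 := mul_le_mul_of_nonneg_right hd2i hφγ.le
  have hφγ1 : φ*γ ≤ 1 := by nlinarith
  nlinarith [h5, k4, hLgpos, hφγ1, hlog2half, hlog2M]

set_option maxHeartbeats 1000000 in
lemma main {V : Type} [Fintype V] [DecidableEq V] (D : Finset (V × V)) (φ γ : ℝ)
    (hφ : 0 < φ) (hγ : 0 < γ)
    (hloop : ∀ e ∈ D, e.1 ≠ e.2)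
    (hexp : ∀ S : Finset V, φ * min (vol D S : ℝ) (vol D Sᶜ : ℝ) ≤ (cut D S : ℝ))
    (hreg : ∀ v : V, γ * (2 * (D.card : ℝ)) / (Fintype.card V : ℝ) ≤ (deg D v : ℝ))
    (hlocal : ∀ e ∈ D, disc D e.2 ≤ disc D e.1 + 2)
    (v : V) : (disc D v : ℝ) ≤ 1000 * Real.log ((D.card : ℝ) + 1) / (φ * γ) := by
  by_cases hd0 : disc D v ≤ 0
  · have h1 : ((disc D v : ℤ) : ℝ) ≤ 0 := by exact_mod_cast hd0
    have h2 : (0:ℝ) ≤ 1000 * Real.log ((D.card : ℝ) + 1) / (φ * γ) := by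
      have : (0:ℝ) ≤ Real.log ((D.card : ℝ) + 1) :=
        Real.log_nonneg (by linarith [Nat.cast_nonneg (α := ℝ) D.card])
      apply div_nonneg (by linarith) (by positivity)
    linarith
  push_neg at hd0
  set d : ℤ := disc D v with hdd
  have hd1 : 1 ≤ d := hd0
  -- basic quantities
  set M : ℝ := (D.card : ℝ) with hM
  set N : ℝ := (Fintype.card V : ℝ) with hN
  set δ : ℝ := γ * (2 * M) / N with hδ
  -- D nonempty
  have hDne : D.Nonempty := by
    by_contra h
    rw [Finset.not_nonempty_iff_eq_empty] at h
    simp [hdd, disc, inDeg, outDeg, h] at hd0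
  have hm1 : 1 ≤ D.card := Finset.card_pos.mpr hDne
  have hM1 : (1:ℝ) ≤ M := by rw [hM]; exact_mod_cast hm1
  have hn1 : 1 ≤ Fintype.card V := Fintype.card_pos_iff.mpr ⟨v⟩
  have hN1 : (1:ℝ) ≤ N := by rw [hN]; exact_mod_cast hn1
  have hδpos : 0 < δ := by
    rw [hδ]
    apply div_pos (by nlinarith) (by linarith)
  have hdeg_le : ∀ u : V, (deg D u : ℝ) ≤ 2 * M := by
    intro u
    have h1 : deg D u ≤ vol D univ :=
      Finset.single_le_sum (f := fun w => deg D w) (fun _ _ => Nat.zero_le _) (mem_univ u)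
    rw [vol_univ] at h1
    have := (Nat.cast_le (α := ℝ)).mpr h1
    push_cast at this
    linarith
  have hδdeg : ∀ u : V, δ ≤ (deg D u : ℝ) := hreg
  have hδ2M : δ ≤ 2 * M := le_trans (hδdeg v) (hdeg_le v)
  -- γ ≤ 1
  have hγ1 : γ ≤ 1 := by
    have h1 : ∑ u : V, δ ≤ ∑ u : V, (deg D u : ℝ) := Finset.sum_le_sum (fun u _ => hδdeg u)
    have h2 : (∑ u : V, (deg D u : ℝ)) = 2 * M := by
      rw [← Nat.cast_sum]
      rw [show (∑ u : V, deg D u) = vol D univ from rfl, vol_univ]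
      push_cast [hM]
      ring
    rw [Finset.sum_const, h2, nsmul_eq_mul, Finset.card_univ, ← hN] at h1
    have hN0 : N ≠ 0 := by linarith
    have hNδ : N * δ = γ * (2 * M) := by
      rw [hδ]
      field_simp
    rw [hNδ] at h1
    nlinarith
  -- φ ≤ 1
  have hφ1 : φ ≤ 1 := by
    have haux : ∀ w : V, 1 ≤ deg D w → deg D w ≤ D.card → φ ≤ 1 := by
      intro w h1 h2
      have hvolw : vol D {w} = deg D w := by rw [vol, Finset.sum_singleton]
      have hvolc : vol D {w} + vol D {w}ᶜ = 2 * D.card := vol_compl D {w}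
      have hcutw : cut D {w} = deg D w := by
        rw [cut_eq, deg]
        have e1 : outof D {w} = outDeg D w := by
          rw [outof, outDeg]
          apply congrArg Finset.card
          apply Finset.filter_congr
          intro e he
          simp only [Finset.mem_singleton]
          constructor
          · exact fun h => h.1
          · intro h
            exact ⟨h, fun h2 => hloop e he (h.trans h2.symm)⟩
        have e2 : into D {w} = inDeg D w := by
          rw [into, inDeg]
          apply congrArg Finset.card
          apply Finset.filter_congr
          intro e he
          simp only [Finset.mem_singleton]
          constructor
          · exact fun h => h.2
          · intro h
            exact ⟨fun h2 => hloop e he (h2.trans h.symm), h⟩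
        rw [e1, e2]
        omega
      have hvc : (vol D {w}ᶜ : ℝ) = 2 * M - (deg D w : ℝ) := by
        have h := hvolc
        rw [hvolw] at h
        have h2 := congrArg (Nat.cast : ℕ → ℝ) h
        push_cast at h2
        rw [hM]
        linarith
      have hx := hexp {w}
      rw [hvolw, hcutw, hvc] at hx
      have hdm : (deg D w : ℝ) ≤ M := by rw [hM]; exact_mod_cast h2
      have hd1' : (1:ℝ) ≤ (deg D w : ℝ) := by exact_mod_cast h1
      rw [min_eq_left (by linarith)] at hx
      nlinarith
    obtain ⟨e, he⟩ := hDne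
    have hdege : deg D e.1 + deg D e.2 ≤ 2 * D.card := by
      have h := Finset.sum_le_sum_of_subset (f := deg D) (Finset.subset_univ {e.1, e.2})
      rw [Finset.sum_pair (hloop e he)] at h
      rw [show (∑ u : V, deg D u) = vol D univ from rfl, vol_univ] at h
      exact h
    have h11 : 1 ≤ deg D e.1 := by
      have hmem : e ∈ D.filter (fun f => f.1 = e.1) := Finset.mem_filter.mpr ⟨he, rfl⟩
      have := Finset.card_pos.mpr ⟨e, hmem⟩
      rw [deg, outDeg]
      omega
    have h21 : 1 ≤ deg D e.2 := by
      have hmem : e ∈ D.filter (fun f => f.2 = e.2) := Finset.mem_filter.mpr ⟨he, rfl⟩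
      have := Finset.card_pos.mpr ⟨e, hmem⟩
      rw [deg, inDeg]
      omega
    rcases le_or_gt (deg D e.1) D.card with h | h
    · exact haux e.1 h11 h
    · exact haux e.2 h21 (by omega)
  -- level sets
  set L : ℤ → Finset V := fun t => univ.filter (fun u => t ≤ disc D u) with hL
  have hLmono : ∀ {s t : ℤ}, s ≤ t → L t ⊆ L s := by
    intro s t hst u hu
    simp only [hL, Finset.mem_filter, Finset.mem_univ, true_and] at hu ⊢
    omega
  have hvolM : ∀ t, (vol D (L t) : ℝ) ≤ 2 * M := by
    intro t
    have h := vol_mono D (Finset.subset_univ (L t))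
    rw [vol_univ] at h
    rw [hM]
    exact_mod_cast h
  have hvmono : ∀ {s t : ℤ}, s ≤ t → (vol D (L t) : ℝ) ≤ (vol D (L s) : ℝ) := by
    intro s t hst
    exact_mod_cast vol_mono D (hLmono hst)
  have hAc : ∀ t, (vol D (L t)ᶜ : ℝ) = 2 * M - (vol D (L t) : ℝ) := by
    intro t
    have h := congrArg (Nat.cast : ℕ → ℝ) (vol_compl D (L t))
    push_cast at h
    rw [hM]
    linarith
  -- step inequality from expansion + local optimality
  have hstep : ∀ t : ℤ, 1 ≤ t →
      φ * min ((vol D (L t) : ℝ)) (2 * M - (vol D (L t) : ℝ))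
        ≤ 2 * ((vol D (L (t-2)) : ℝ) - (vol D (L t) : ℝ)) := by
    intro t ht
    have hnet : 0 ≤ ∑ u ∈ L t, disc D u := by
      apply Finset.sum_nonneg
      intro u hu
      simp only [hL, Finset.mem_filter] at hu
      omega
    have hoi : outof D (L t) ≤ into D (L t) := by
      rw [flow D (L t)] at hnet
      omega
    have hcut2 : (cut D (L t) : ℝ) ≤ 2 * (into D (L t) : ℝ) := by
      have h := cut_eq D (L t)
      exact_mod_cast (show cut D (L t) ≤ 2 * into D (L t) by omega)
    have hinto : (into D (L t) : ℝ) ≤ (vol D (L (t-2)) : ℝ) - (vol D (L t) : ℝ) := by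
      have h := into_le D (hLmono (by omega : t - 2 ≤ t)) ?_
      · have h' := (Nat.cast_le (α := ℝ)).mpr h
        push_cast at h'
        linarith
      · intro e he h2
        simp only [hL, Finset.mem_filter, Finset.mem_univ, true_and] at h2 ⊢
        have := hlocal e he
        omega
    have hx := hexp (L t)
    rw [hAc t] at hx
    linarith
  -- complement volume lower bound
  have hWge : ∀ t : ℤ, 1 ≤ t → δ ≤ 2 * M - (vol D (L t) : ℝ) := by
    intro t ht
    have hne : L t ≠ univ := by
      intro hLu
      have h0 : (∑ u : V, disc D u) = 0 := by
        have h := flow D (univ : Finset V)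
        have h1 : into D (univ : Finset V) = 0 := by
          simp [into]
        have h2 : outof D (univ : Finset V) = 0 := by
          simp [outof]
        rw [h1, h2] at h
        simpa using h
      have hall : ∀ u ∈ (univ : Finset V), 1 ≤ disc D u := by
        intro u _
        have hu : u ∈ L t := hLu ▸ Finset.mem_univ u
        simp only [hL, Finset.mem_filter, Finset.mem_univ, true_and] at hu
        omega
      have hge := Finset.sum_le_sum hall
      rw [h0] at hge
      simp only [Finset.sum_const, Finset.card_univ, nsmul_eq_mul, mul_one] at hge
      have : (1:ℤ) ≤ Fintype.card V := by exact_mod_cast hn1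
      omega
    obtain ⟨u, hu⟩ : ∃ u, u ∉ L t := by
      by_contra h
      push_neg at h
      exact hne (Finset.eq_univ_iff_forall.mpr h)
    have h1 : deg D u ≤ vol D (L t)ᶜ :=
      Finset.single_le_sum (f := fun w => deg D w) (fun _ _ => Nat.zero_le _)
        (Finset.mem_compl.mpr hu)
    have h2 : (deg D u : ℝ) ≤ (vol D (L t)ᶜ : ℝ) := by exact_mod_cast h1
    rw [hAc t] at h2
    linarith [hδdeg u]
  have hden : ∀ t : ℤ, 0 < 2 * M - (vol D (L t) : ℝ) + δ := by
    intro t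
    linarith [hvolM t]
  -- the potential function
  set Φ : ℤ → ℝ := fun t => (vol D (L t) : ℝ) / (2 * M - (vol D (L t) : ℝ) + δ) with hΦ
  have hΦstep : ∀ t : ℤ, 1 ≤ t → (1 + φ/4) * Φ t ≤ Φ (t - 2) := by
    intro t ht
    simp only [hΦ]
    exact ratio_step φ δ M _ _ hφ hδpos (Nat.cast_nonneg _) (Nat.cast_nonneg _)
      (hvmono (by omega : t - 2 ≤ t)) (hvolM (t-2)) (hWge t ht) (hstep t ht)
  have hΦ0 : ∀ t : ℤ, 0 ≤ Φ t := by
    intro t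
    simp only [hΦ]
    exact div_nonneg (Nat.cast_nonneg _) (le_of_lt (hden t))
  have hΦiter : ∀ i : ℕ, 1 ≤ d - 2*(i:ℤ) → (1 + φ/4)^i * Φ d ≤ Φ (d - 2*(i:ℤ)) := by
    intro i
    induction i with
    | zero => intro _; simp
    | succ i ih =>
      intro h
      have hi : 1 ≤ d - 2*(i:ℤ) := by push_cast at h ⊢; omega
      have h1 := ih hi
      have h2 := hΦstep (d - 2*(i:ℤ)) hi
      have h3 : d - 2*(((i+1):ℕ):ℤ) = d - 2*(i:ℤ) - 2 := by push_cast; ring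
      rw [h3]
      calc (1 + φ/4)^(i+1) * Φ d = (1 + φ/4) * ((1 + φ/4)^i * Φ d) := by ring
        _ ≤ (1 + φ/4) * Φ (d - 2*(i:ℤ)) := by
            apply mul_le_mul_of_nonneg_left h1 (by linarith)
        _ ≤ Φ (d - 2*(i:ℤ) - 2) := h2
  -- endpoint bounds on Φ
  have hvLd : v ∈ L d := by
    simp only [hL, Finset.mem_filter, Finset.mem_univ, true_and]
    omega
  have hAd : δ ≤ (vol D (L d) : ℝ) := by
    have h1 : deg D v ≤ vol D (L d) :=
      Finset.single_le_sum (f := fun w => deg D w) (fun _ _ => Nat.zero_le _) hvLd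
    have h2 : (deg D v : ℝ) ≤ (vol D (L d) : ℝ) := by exact_mod_cast h1
    linarith [hδdeg v]
  have hΦd : δ / (2*M + δ) ≤ Φ d := by
    simp only [hΦ]
    rw [div_le_div_iff₀ (by linarith) (hden d)]
    nlinarith [hAd, hvolM d, hδpos, mul_le_mul_of_nonneg_right hAd (show (0:ℝ) ≤ 2*M + δ by linarith)]
  have hΦtop : ∀ t : ℤ, 1 ≤ t → Φ t ≤ 2*M/δ := by
    intro t ht
    simp only [hΦ]
    rw [div_le_div_iff₀ (hden t) hδpos]
    nlinarith [hvolM t, hWge t ht, hδpos, Nat.cast_nonneg (α := ℝ) (vol D (L t))]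
  -- choose the number of iterations
  set i : ℕ := ((d - 1)/2).toNat with hi
  have hiz : ((i:ℕ):ℤ) = (d-1)/2 := Int.toNat_of_nonneg (by omega)
  have hi1 : 1 ≤ d - 2*(i:ℤ) := by rw [hiz]; omega
  have hd2i : (d:ℝ) ≤ 2*(i:ℝ) + 2 := by
    have h : d ≤ 2*((i:ℕ):ℤ) + 2 := by rw [hiz]; omega
    exact_mod_cast h
  set P : ℝ := (1 + φ/4)^i with hP
  have hPpos : 0 < P := by rw [hP]; positivity
  have hchain : P * (δ/(2*M+δ)) ≤ 2*M/δ := by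
    calc P * (δ/(2*M+δ)) ≤ P * Φ d := by
          apply mul_le_mul_of_nonneg_left hΦd (le_of_lt hPpos)
      _ ≤ Φ (d - 2*(i:ℤ)) := hΦiter i hi1
      _ ≤ 2*M/δ := hΦtop _ hi1
  have hN2M : N ≤ 2*M := by
    have hdeg1 : ∀ u : V, 1 ≤ deg D u := by
      intro u
      have h1 := hδdeg u
      by_contra h
      push_neg at h
      have h0 : deg D u = 0 := by omega
      rw [h0] at h1
      simp at h1
      linarith
    have hn2m : Fintype.card V ≤ 2 * D.card := by
      calc Fintype.card V = ∑ _u : V, 1 := by simp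
        _ ≤ ∑ u : V, deg D u := Finset.sum_le_sum (fun u _ => hdeg1 u)
        _ = 2 * D.card := vol_univ D
    rw [hN, hM]
    exact_mod_cast hn2m
  exact endgame φ γ M N δ ((d:ℤ):ℝ) i hφ hγ hφ1 hγ1 hM1 hN1 hN2M hδ hδpos hδ2M hchain hd2i
lemma mem_swap (D : Finset (V × V)) (e : V × V) :
    e ∈ D.image Prod.swap ↔ e.swap ∈ D := by
  constructor
  · intro h
    obtain ⟨a, ha, rfl⟩ := Finset.mem_image.mp h
    simpa [Prod.swap_swap] using ha
  · intro h
    exact Finset.mem_image.mpr ⟨e.swap, h, Prod.swap_swap e⟩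

lemma inDeg_swap (D : Finset (V × V)) (v : V) :
    inDeg (D.image Prod.swap) v = outDeg D v := by
  rw [inDeg, Finset.filter_image, Finset.card_image_of_injective _ Prod.swap_injective, outDeg]
  apply congrArg Finset.card
  apply Finset.filter_congr
  intro e _
  simp [Prod.snd_swap]

lemma outDeg_swap (D : Finset (V × V)) (v : V) :
    outDeg (D.image Prod.swap) v = inDeg D v := by
  rw [outDeg, Finset.filter_image, Finset.card_image_of_injective _ Prod.swap_injective, inDeg]
  apply congrArg Finset.card
  apply Finset.filter_congr
  intro e _
  simp [Prod.fst_swap]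

lemma deg_swap (D : Finset (V × V)) (v : V) : deg (D.image Prod.swap) v = deg D v := by
  rw [deg, deg, inDeg_swap, outDeg_swap]
  omega

lemma vol_swap (D : Finset (V × V)) (S : Finset V) : vol (D.image Prod.swap) S = vol D S :=
  Finset.sum_congr rfl (fun v _ => deg_swap D v)

lemma disc_swap (D : Finset (V × V)) (v : V) : disc (D.image Prod.swap) v = - disc D v := by
  rw [disc, disc, inDeg_swap, outDeg_swap]
  ring

lemma cut_swap (D : Finset (V × V)) (S : Finset V) : cut (D.image Prod.swap) S = cut D S := by
  rw [cut, Finset.filter_image, Finset.card_image_of_injective _ Prod.swap_injective, cut]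
  apply congrArg Finset.card
  apply Finset.filter_congr
  intro e _
  simp only [Prod.fst_swap, Prod.snd_swap]
  tauto

lemma card_swap (D : Finset (V × V)) : (D.image Prod.swap).card = D.card :=
  Finset.card_image_of_injective _ Prod.swap_injective

end LS

/-- **Local search on weakly-regular expanders has low discrepancy.**
If the underlying graph (with `m` edges) of the orientation `D` is a `φ`-expander and
`γ`-weakly-regular, and `D` is a local optimum of edge-flip local search
(no directed edge `(u,v)` with `disc v > disc u + 2`), then every vertex has
discrepancy `O(log m / (φ γ))`. -/
theorem stmt1 :
    ∃ C : ℝ, 0 < C ∧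
      ∀ (V : Type) (_ : Fintype V) (_ : DecidableEq V) (D : Finset (V × V)) (φ γ : ℝ),
        0 < φ → 0 < γ →
        (∀ e ∈ D, e.1 ≠ e.2) →
        (∀ u v : V, (u, v) ∈ D → (v, u) ∉ D) →
        (∀ S : Finset V, φ * min (vol D S : ℝ) (vol D Sᶜ : ℝ) ≤ (cut D S : ℝ)) →
        (∀ v : V, γ * (2 * (D.card : ℝ)) / (Fintype.card V : ℝ) ≤ (deg D v : ℝ)) →
        (∀ e ∈ D, disc D e.2 ≤ disc D e.1 + 2) →
        ∀ v : V, |(disc D v : ℝ)| ≤ C * Real.log ((D.card : ℝ) + 1) / (φ * γ) := by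

  refine ⟨1000, by norm_num, ?_⟩
  intro V i1 i2 D φ γ hφ hγ hloop _hanti hexp hreg hlocal v
  rw [abs_le]
  constructor
  · -- lower bound via the reversed orientation
    set D' : Finset (V × V) := D.image Prod.swap with hD'
    have hcard : D'.card = D.card := LS.card_swap D
    have hloop' : ∀ e ∈ D', e.1 ≠ e.2 := by
      intro e he h
      exact hloop e.swap ((LS.mem_swap D e).mp he) (by simpa [Prod.swap] using h.symm)
    have hexp' : ∀ S : Finset V, φ * min (vol D' S : ℝ) (vol D' Sᶜ : ℝ) ≤ (cut D' S : ℝ) := by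
      intro S
      rw [hD', LS.vol_swap, LS.vol_swap, LS.cut_swap]
      exact hexp S
    have hreg' : ∀ u : V, γ * (2 * (D'.card : ℝ)) / (Fintype.card V : ℝ) ≤ (deg D' u : ℝ) := by
      intro u
      rw [hcard, hD', LS.deg_swap]
      exact hreg u
    have hlocal' : ∀ e ∈ D', disc D' e.2 ≤ disc D' e.1 + 2 := by
      intro e he
      have hf := hlocal e.swap ((LS.mem_swap D e).mp he)
      rw [hD', LS.disc_swap, LS.disc_swap]
      simp only [Prod.fst_swap, Prod.snd_swap] at hf
      omega
    have h := LS.main D' φ γ hφ hγ hloop' hexp' hreg' hlocal' v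
    rw [hcard, hD', LS.disc_swap] at h
    push_cast at h ⊢
    linarith
  · exact LS.main D φ γ hφ hγ hloop hexp hreg hlocal v
end

section
/- Let G be a directed graph that is a local optimum of edge-flip local search (no directed edge (u,v) with disc(v) > disc(u)+2). Let v be a vertex of maximum discrepancy k ≥ 0, and let L_i be the set of vertices whose shortest path to v following reverse edge directions has exactly i edges. Then every vertex in L_i has discrepancy at least k − 2i. -/
open Finset

/-- Vertices reachable from `v` in at most `i` steps following edges backwards
(i.e., along incoming edges). -/
def reach {V : Type*} (D : Finset (V × V)) (v : V) : ℕ → Set V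
  | 0 => {v}
  | (i + 1) => reach D v i ∪ {w | ∃ u ∈ reach D v i, (w, u) ∈ D}

/-- BFS layers from `v` following incoming edges: `layers D v i` is the set of vertices
whose shortest path to `v` (following reverse edge directions) has exactly `i` edges. -/
def layers {V : Type*} (D : Finset (V × V)) (v : V) : ℕ → Set V
  | 0 => {v}
  | (i + 1) => {w | w ∉ reach D v i ∧ ∃ u ∈ layers D v i, (w, u) ∈ D}

theorem stmt2_general (V : Type*) [DecidableEq V] (D : Finset (V × V)) (v : V)
    (hopt : ∀ e ∈ D, disc D e.2 ≤ disc D e.1 + 2) :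
    ∀ i : ℕ, ∀ w ∈ layers D v i, disc D v - 2 * (i : ℤ) ≤ disc D w := by
  intro i
  induction i with
  | zero =>
    rintro w rfl
    simp
  | succ i ih =>
    rintro w ⟨-, u, hu, hwu⟩
    have hedge : disc D u ≤ disc D w + 2 := hopt (w, u) hwu
    have hu_bound : disc D v - 2 * (i : ℤ) ≤ disc D u := ih u hu
    push_cast
    linarith

/-- **Discrepancy decreases by at most 2 per BFS layer at a local optimum.**
If no directed edge `(u,w)` has `disc w > disc u + 2`, `v` has maximum discrepancy
`k = disc v ≥ 0`, then every vertex in layer `i` has discrepancy at least `k - 2i`. -/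
theorem stmt2 (V : Type*) [Fintype V] [DecidableEq V] (D : Finset (V × V)) (v : V)
    (hopt : ∀ e ∈ D, disc D e.2 ≤ disc D e.1 + 2)
    (hmax : ∀ w : V, disc D w ≤ disc D v)
    (hk : 0 ≤ disc D v) :
    ∀ i : ℕ, ∀ w ∈ layers D v i, disc D v - 2 * (i : ℤ) ≤ disc D w :=
  stmt2_general V D v hopt
end

section
/- There exists, for every n divisible by 8, a finite multiset of vectors in {−1,+1}^n with the all-ones signing such that (a) the signing is a local optimum of the ℓ₂-potential local search (for every vector a in the multiset, ⟨S, a⟩ ≤ n where S is the signed sum), and (b) the discrepancy ‖S‖_∞ is at least c·2^{n/2} for an absolute constant c > 0, while (c) the optimal offline discrepancy of the multiset is 0. -/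
/-!
Let `J k = jac k` run through `1, 1, 3, 5, 11, …` (so `J k ≈ 2^(k+1) / 3`) and let
`S k = (J k, J k, J (k-1), J (k-1), …, J 0, J 0) ∈ ℤ^(2k+2)` (`target k`). By induction on `k`
we build a family `B k` (`targetFamily k`) of sign vectors with sum `S k` and `⟨S k, v⟩ ≤ 2` for
every member `v`, together with a family `Z k` (`onesFamily k`) with the same property whose sum
is the all-ones vector. The families at level `k + 1` consist of `c` copies of
`(1, 1, -1, …, -1)` followed by an even-sized pool of level-`k` vectors, half of them prefixed by
`(1, -1)` and half by `(-1, 1)`; the pool is `B k` plus `J (k+1)` copies of `Z k` (with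
`c = J (k+1)`), resp. two copies of `Z k` (with `c = 1`). Prefixing `±(1, -1)` does not change
inner products with `S (k+1)`, and the rows `(1, 1, -1, …, -1)` have inner product
`2 J (k+1) - ∑ S k = J (k+1) - 2 J k + 1 ≤ 2`.

Two copies of `B k` then sum to `2 S k`, so in dimension `n = 2k + 2 ≥ 4` the all-ones signing
is a local optimum with discrepancy `2 J k ≥ 2^(n/2) / 2`, while signing the second copy by
`-1` cancels everything.
-/

open Finset Matrix

namespace LocalSearchLowerBound

/-- The Jacobsthal numbers shifted by one: `jac k = J_(k+1)` in the usual indexing. -/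
def jac : ℕ → ℕ
  | 0 => 1
  | 1 => 1
  | k + 2 => jac (k + 1) + 2 * jac k

theorem odd_jac : ∀ k, Odd (jac k)
  | 0 | 1 => odd_one
  | k + 2 => (odd_jac (k + 1)).add_even (even_two_mul _)

theorem two_pow_le_two_mul_jac : ∀ k, 2 ^ k ≤ 2 * jac k
  | 0 | 1 => by decide
  | k + 2 => by
    have := two_pow_le_two_mul_jac k
    have := two_pow_le_two_mul_jac (k + 1)
    rw [jac]
    rw [pow_succ] at *
    omega

theorem abs_jac_succ_sub_two_mul (k : ℕ) : |(jac (k + 1) : ℤ) - 2 * jac k| = 1 := by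
  induction k with
  | zero => decide
  | succ k ih =>
    rw [jac, ← ih, ← abs_neg]
    push_cast
    ring_nf

variable {k : ℕ}

def cons2 (p q : ℤ) (v : Fin (2 * k + 2) → ℤ) : Fin (2 * (k + 1) + 2) → ℤ :=
  vecCons p (vecCons q v)

theorem cons2_add_cons2 (p q p' q' : ℤ) (v w : Fin (2 * k + 2) → ℤ) :
    cons2 p q v + cons2 p' q' w = cons2 (p + p') (q + q') (v + w) := by
  simp only [cons2, cons_add_cons]

theorem cons2_dotProduct_cons2 (p q p' q' : ℤ) (v w : Fin (2 * k + 2) → ℤ) :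
    cons2 p q v ⬝ᵥ cons2 p' q' w = p * p' + q * q' + v ⬝ᵥ w := by
  simp only [cons2, cons_dotProduct_cons, add_assoc]

theorem cons2_one_one_one : cons2 1 1 (1 : Fin (2 * k + 2) → ℤ) = 1 := by
  ext j
  exact Fin.cases rfl (Fin.cases rfl fun _ => rfl) j

theorem sum_map_cons2 (p q : ℤ) (l : List (Fin (2 * k + 2) → ℤ)) :
    (l.map (cons2 p q)).sum = cons2 (l.length * p) (l.length * q) l.sum := by
  induction l with
  | nil => simp [cons2]
  | cons v l ih =>
    simp only [List.map_cons, List.sum_cons, ih, cons2_add_cons2, List.length_cons]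
    congr 1 <;> push_cast <;> ring

def target : (k : ℕ) → Fin (2 * k + 2) → ℤ
  | 0 => 1
  | k + 1 => cons2 (jac (k + 1)) (jac (k + 1)) (target k)

theorem target_apply_zero : ∀ k, target k 0 = jac k
  | 0 => rfl
  | _ + 1 => rfl

theorem target_dotProduct_one_add_one (k : ℕ) : target k ⬝ᵥ 1 + 1 = jac (k + 2) := by
  induction k with
  | zero => rfl
  | succ k ih =>
    rw [target, ← cons2_one_one_one, cons2_dotProduct_cons2, add_assoc, ih, jac.eq_3 (k + 1)]
    push_cast
    ring

def IsAdmissible (k : ℕ) (v : Fin (2 * k + 2) → ℤ) : Prop :=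
  (∀ j, v j = 1 ∨ v j = -1) ∧ target k ⬝ᵥ v ≤ 2

theorem isAdmissible_zero_one : IsAdmissible 0 1 :=
  ⟨fun _ => Or.inl rfl, by decide⟩

theorem IsAdmissible.cons2 {p q : ℤ} {v : Fin (2 * k + 2) → ℤ} (hv : IsAdmissible k v)
    (hp : p = 1 ∨ p = -1) (hpq : p + q = 0) : IsAdmissible (k + 1) (cons2 p q v) := by
  refine ⟨fun j => Fin.cases hp (Fin.cases (show q = 1 ∨ q = -1 by omega) hv.1) j, ?_⟩
  rw [target, cons2_dotProduct_cons2, ← mul_add, hpq]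
  linarith [hv.2]

theorem isAdmissible_cons2_one_one_neg_one (k : ℕ) :
    IsAdmissible (k + 1) (cons2 1 1 (-1)) := by
  refine ⟨fun j => Fin.cases (Or.inl rfl) (Fin.cases (Or.inl rfl) fun _ => Or.inr rfl) j, ?_⟩
  have hjac := (abs_le.mp (abs_jac_succ_sub_two_mul k).le).2
  have hsum := target_dotProduct_one_add_one k
  rw [jac] at hsum
  rw [target, cons2_dotProduct_cons2, dotProduct_neg]
  push_cast at hsum
  linarith

def extendFamily (c : ℕ) (l : List (Fin (2 * k + 2) → ℤ)) :
    List (Fin (2 * (k + 1) + 2) → ℤ) :=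
  List.replicate c (cons2 1 1 (-1)) ++ (l.take (l.length / 2)).map (cons2 1 (-1)) ++
    (l.drop (l.length / 2)).map (cons2 (-1) 1)

theorem length_extendFamily (c : ℕ) (l : List (Fin (2 * k + 2) → ℤ)) :
    (extendFamily c l).length = c + l.length := by
  simp only [extendFamily, List.length_append, List.length_replicate, List.length_map,
    List.length_take, List.length_drop]
  omega

theorem isAdmissible_of_mem_extendFamily {c : ℕ} {l : List (Fin (2 * k + 2) → ℤ)}
    (hl : ∀ u ∈ l, IsAdmissible k u) {v : Fin (2 * (k + 1) + 2) → ℤ}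
    (hv : v ∈ extendFamily c l) : IsAdmissible (k + 1) v := by
  simp only [extendFamily, List.mem_append, List.mem_replicate, List.mem_map] at hv
  rcases hv with (⟨-, rfl⟩ | ⟨u, hu, rfl⟩) | ⟨u, hu, rfl⟩
  · exact isAdmissible_cons2_one_one_neg_one k
  · exact (hl u (List.take_subset _ _ hu)).cons2 (Or.inl rfl) (by norm_num)
  · exact (hl u (List.drop_subset _ _ hu)).cons2 (Or.inr rfl) (by norm_num)

theorem sum_extendFamily {c : ℕ} {l : List (Fin (2 * k + 2) → ℤ)} {s : Fin (2 * k + 2) → ℤ}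
    (hl : Even l.length) (hs : l.sum = s + c • 1) : (extendFamily c l).sum = cons2 c c s := by
  obtain ⟨h, hh⟩ := hl
  have htake : (l.take (l.length / 2)).length = h := by simp only [List.length_take]; omega
  have hdrop : (l.drop (l.length / 2)).length = h := by simp only [List.length_drop]; omega
  have hsplit := congrArg List.sum (List.take_append_drop (l.length / 2) l)
  rw [List.sum_append, hs] at hsplit
  rw [extendFamily, List.sum_append, List.sum_append, sum_map_cons2, sum_map_cons2, htake, hdrop,
    List.sum_replicate, cons2, smul_cons, smul_cons, ← cons2, cons2_add_cons2, cons2_add_cons2,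
    add_assoc (c • -1), hsplit]
  congr 1 <;> simp

def onesFamily : (k : ℕ) → List (Fin (2 * k + 2) → ℤ)
  | 0 => [1]
  | k + 1 => extendFamily 1 (onesFamily k ++ onesFamily k)

theorem isAdmissible_of_mem_onesFamily : ∀ k, ∀ v ∈ onesFamily k, IsAdmissible k v
  | 0, _, hv => by
    obtain rfl := List.mem_singleton.mp hv
    exact isAdmissible_zero_one
  | k + 1, _, hv => isAdmissible_of_mem_extendFamily (by
      simpa only [List.mem_append, or_self] using isAdmissible_of_mem_onesFamily k) hv

theorem sum_onesFamily : ∀ k, (onesFamily k).sum = 1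
  | 0 => List.sum_singleton
  | k + 1 => by
    rw [onesFamily, sum_extendFamily (by simp)
      (by rw [List.sum_append, sum_onesFamily k, one_smul]), Nat.cast_one, cons2_one_one_one]

theorem odd_length_onesFamily : ∀ k, Odd (onesFamily k).length
  | 0 => odd_one
  | k + 1 => by
    rw [onesFamily, length_extendFamily, List.length_append]
    exact odd_one.add_even (by simp)

def targetFamily : (k : ℕ) → List (Fin (2 * k + 2) → ℤ)
  | 0 => [1]
  | k + 1 => extendFamily (jac (k + 1))
      (targetFamily k ++ (List.replicate (jac (k + 1)) (onesFamily k)).flatten)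

theorem isAdmissible_of_mem_targetFamily : ∀ k, ∀ v ∈ targetFamily k, IsAdmissible k v
  | 0, _, hv => by
    obtain rfl := List.mem_singleton.mp hv
    exact isAdmissible_zero_one
  | k + 1, _, hv => isAdmissible_of_mem_extendFamily (fun u hu => by
      simp only [List.mem_append, List.mem_flatten, List.mem_replicate] at hu
      rcases hu with hu | ⟨_, ⟨-, rfl⟩, hu⟩
      · exact isAdmissible_of_mem_targetFamily k u hu
      · exact isAdmissible_of_mem_onesFamily k u hu) hv

theorem even_length_targetFamily_append (k : ℕ) (h : Odd (targetFamily k).length) :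
    Even (targetFamily k ++ (List.replicate (jac (k + 1)) (onesFamily k)).flatten).length := by
  simp only [List.length_append, List.length_flatten, List.map_replicate, List.sum_replicate,
    smul_eq_mul]
  exact h.add_odd ((odd_jac _).mul (odd_length_onesFamily k))

theorem odd_length_targetFamily : ∀ k, Odd (targetFamily k).length
  | 0 => odd_one
  | k + 1 => by
    rw [targetFamily, length_extendFamily]
    exact (odd_jac _).add_even (even_length_targetFamily_append k (odd_length_targetFamily k))

theorem sum_targetFamily : ∀ k, (targetFamily k).sum = target k
  | 0 => List.sum_singleton
  | k + 1 => by
    rw [targetFamily, target, sum_extendFamily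
      (even_length_targetFamily_append k (odd_length_targetFamily k))]
    rw [List.sum_append, List.sum_flatten, List.map_replicate, List.sum_replicate,
      sum_targetFamily k, sum_onesFamily]

end LocalSearchLowerBound

theorem exists_doubled_family {V : Type*} [AddCommGroup V] (l : List V) :
    ∃ (T : ℕ) (a : Fin T → V), (∀ i, a i ∈ l) ∧ ∑ i, a i = 2 • l.sum ∧
      ∃ ε : Fin T → ℤ, (∀ i, ε i = 1 ∨ ε i = -1) ∧ ∑ i, ε i • a i = 0 := by
  have hsum : ∑ i, l.get i = l.sum := by rw [← List.sum_ofFn, List.ofFn_get]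
  refine ⟨l.length + l.length, Fin.append l.get l.get, fun i => ?_, ?_,
    Fin.append (fun _ => 1) (fun _ => -1), fun i => ?_, ?_⟩
  · refine Fin.addCases (fun i => ?_) (fun i => ?_) i <;>
      simp only [Fin.append_left, Fin.append_right, List.get_mem]
  · rw [Fin.sum_univ_add]
    simp only [Fin.append_left, Fin.append_right, hsum, two_nsmul]
  · refine Fin.addCases (fun i => ?_) (fun i => ?_) i <;>
      simp only [Fin.append_left, Fin.append_right, true_or, or_true]
  · rw [Fin.sum_univ_add]
    simp only [Fin.append_left, Fin.append_right, one_smul, neg_smul, sum_neg_distrib, hsum,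
      add_neg_cancel]

open LocalSearchLowerBound in
/-- **Exponential lower bound for ℓ₂ local search on `{±1}` vectors.**
There is a constant `c > 0` such that for every positive `n` divisible by `8` there is a
finite collection of `{±1}ⁿ` vectors on which the all-ones signing is a local optimum of
the ℓ₂-potential local search (`⟨S, aᵢ⟩ ≤ n` for every vector, where `S` is the signed
sum), yet `‖S‖_∞ ≥ c·2^{n/2}`, while some `±1` signing of the same collection has
discrepancy `0`. -/
theorem stmt5 :
    ∃ c : ℝ, 0 < c ∧
      ∀ n : ℕ, 0 < n → 8 ∣ n →
        ∃ (T : ℕ) (a : Fin T → Fin n → ℤ),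
          (∀ i j, a i j = 1 ∨ a i j = -1) ∧
          (∀ i : Fin T, (∑ j : Fin n, (∑ i' : Fin T, a i' j) * a i j) ≤ (n : ℤ)) ∧
          (∃ j : Fin n, c * 2 ^ (n / 2) ≤ |((∑ i' : Fin T, a i' j : ℤ) : ℝ)|) ∧
          (∃ ε : Fin T → ℤ, (∀ i, ε i = 1 ∨ ε i = -1) ∧
            ∀ j : Fin n, ∑ i : Fin T, ε i * a i j = 0) := by
  refine ⟨1 / 2, by norm_num, fun n hn h8 => ?_⟩
  obtain ⟨k, rfl⟩ : ∃ k, n = 2 * k + 2 := ⟨n / 2 - 1, by omega⟩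
  obtain ⟨T, a, ha, hsum, ε, hε, hεa⟩ := exists_doubled_family (targetFamily k)
  have hcol (j) : ∑ i, a i j = 2 * target k j := by
    rw [← Finset.sum_apply, hsum, sum_targetFamily, Pi.smul_apply, two_nsmul, two_mul]
  refine ⟨T, a, fun i => (isAdmissible_of_mem_targetFamily k _ (ha i)).1, fun i => ?_, ⟨0, ?_⟩,
    ε, hε, fun j => ?_⟩
  · have := (isAdmissible_of_mem_targetFamily k _ (ha i)).2
    simp only [hcol, mul_assoc, ← Finset.mul_sum]
    change 2 * (target k ⬝ᵥ a i) ≤ _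
    push_cast
    omega
  · have : (2 : ℝ) ^ k ≤ 2 * jac k := by exact_mod_cast two_pow_le_two_mul_jac k
    rw [hcol, target_apply_zero, show (2 * k + 2) / 2 = k + 1 by omega]
    push_cast
    rw [abs_of_nonneg (by positivity), pow_succ]
    linarith
  · simpa only [Finset.sum_apply, Pi.smul_apply, smul_eq_mul, Pi.zero_apply]
      using congrFun hεa j
end

section
/- For every n there exist two-dimensional instances showing the ℓ₂-potential local search has large discrepancy: for even T, the multiset consisting of T/2 copies of (1, 1/√T) and T/2 copies of (−1, 1/√T) with the all-(+1) signing satisfies, for every vector a in the multiset, ‖S − 2a‖₂² − ‖S‖₂² = 4/T > 0 where S = (0, √T) is the signed sum, so the signing is a strict local optimum, and its discrepancy ‖S‖_∞ equals √T. -/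
open Finset

/-- **Two-dimensional `Ω(√T)` local optimum for the ℓ₂ potential.**
For even `T > 0`, the multiset of `T/2` copies of `(1, 1/√T)` and `T/2` copies of
`(−1, 1/√T)` with the all-`+1` signing has signed sum `S = (0, √T)`; flipping any single
vector increases the ℓ₂ potential by exactly `4/T > 0` (strict local optimum), and the
discrepancy `‖S‖_∞` equals `√T`. -/
theorem stmt9 (T : ℕ) (hT : 0 < T) (hTe : 2 ∣ T)
    (a : Fin T → Fin 2 → ℝ)
    (ha : ∀ i : Fin T, a i = ![if (i : ℕ) < T / 2 then 1 else -1, 1 / Real.sqrt T])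
    (S : Fin 2 → ℝ) (hS : S = ∑ i : Fin T, a i) :
    (S 0 = 0 ∧ S 1 = Real.sqrt T) ∧
    (∀ i : Fin T, (∑ j : Fin 2, (S j - 2 * a i j) ^ 2) - (∑ j : Fin 2, (S j) ^ 2)
        = 4 / (T : ℝ)) ∧
    (0 : ℝ) < 4 / (T : ℝ) ∧
    max |S 0| |S 1| = Real.sqrt T := by
  have hTs : (0:ℝ) < Real.sqrt T := Real.sqrt_pos.2 (by exact_mod_cast hT)
  have hmul : Real.sqrt T * Real.sqrt T = (T:ℝ) := Real.mul_self_sqrt (by positivity)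
  have hhalf : T / 2 ≤ T := Nat.div_le_self T 2
  have h0 : S 0 = 0 := by
    rw [hS]
    simp only [Finset.sum_apply, ha, Matrix.cons_val_zero]
    rw [Fin.sum_univ_eq_sum_range (fun k => if k < T / 2 then (1:ℝ) else -1)]
    rw [Finset.range_eq_Ico, ← Finset.sum_Ico_consecutive _ (Nat.zero_le (T/2)) hhalf]
    rw [Finset.sum_congr rfl (fun k hk => if_pos (Finset.mem_Ico.1 hk).2),
        Finset.sum_congr rfl (fun k hk => if_neg (not_lt.2 (Finset.mem_Ico.1 hk).1))]
    simp only [Finset.sum_const, Nat.card_Ico, smul_eq_mul]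
    have : T - T / 2 = T / 2 := by omega
    rw [this]; simp
  have h1 : S 1 = Real.sqrt T := by
    rw [hS]
    simp only [Finset.sum_apply, ha, Matrix.cons_val_one, Matrix.head_cons, Matrix.cons_val_zero]
    rw [Finset.sum_const, Finset.card_univ, Fintype.card_fin]
    rw [nsmul_eq_mul, mul_one_div, eq_comm, eq_div_iff (ne_of_gt hTs), hmul]
  refine ⟨⟨h0, h1⟩, ?_, by positivity, ?_⟩
  · intro i
    rw [Fin.sum_univ_two, Fin.sum_univ_two, h0, h1, ha i]
    simp only [Matrix.cons_val_zero, Matrix.cons_val_one, Matrix.head_cons]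
    have hne : Real.sqrt T ≠ 0 := ne_of_gt hTs
    have hTne : (T:ℝ) ≠ 0 := by positivity
    split <;> field_simp <;> nlinarith [hmul]
  · rw [h0, h1, abs_zero, abs_of_pos hTs]
    exact max_eq_right hTs.le
end

section
/- Let a_1, …, a_T ∈ {−1,+1}^n and S = ∑_i a_i, and suppose ⟨S, a_i⟩ ≤ n for all i (local optimality of the all-ones signing for the ℓ₂ potential). Then ‖S‖_∞ ≤ n^{O(n)}; concretely, ‖S‖_∞ ≤ n · n' · (n'−1)^{n'-1} for some n' ≤ n, independent of T. -/
open Finset Matrix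

set_option maxHeartbeats 1000000

/-- Leibniz bound: entries bounded by β ⇒ |det| ≤ k! β^k. -/
lemma leib {k : ℕ} (A : Matrix (Fin k) (Fin k) ℤ) {β : ℤ} (hβ : 0 ≤ β)
    (h : ∀ i j, |A i j| ≤ β) : |A.det| ≤ (Nat.factorial k : ℤ) * β ^ k := by
  rw [Matrix.det_apply]
  calc |∑ σ : Equiv.Perm (Fin k), Equiv.Perm.sign σ • ∏ i, A (σ i) i|
      ≤ ∑ σ : Equiv.Perm (Fin k), |Equiv.Perm.sign σ • ∏ i, A (σ i) i| :=
        Finset.abs_sum_le_sum_abs _ _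
    _ ≤ ∑ σ : Equiv.Perm (Fin k), β ^ k := by
        refine Finset.sum_le_sum fun σ _ => ?_
        have h1 : |Equiv.Perm.sign σ • ∏ i, A (σ i) i| = |∏ i, A (σ i) i| := by
          rcases Int.units_eq_one_or (Equiv.Perm.sign σ) with h | h <;>
            simp [h, Units.smul_def]
        rw [h1, Finset.abs_prod]
        calc ∏ i, |A (σ i) i| ≤ ∏ _i : Fin k, β :=
              Finset.prod_le_prod (fun i _ => abs_nonneg _) (fun i _ => h _ _)
          _ = β ^ k := by simp
    _ = (Nat.factorial k : ℤ) * β ^ k := by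
        rw [Finset.sum_const, Finset.card_univ, Fintype.card_perm, Fintype.card_fin,
          nsmul_eq_mul]

section detbounds
variable {m : ℕ}

private def rr (A : Matrix (Fin (m+1)) (Fin (m+1)) ℤ) : Matrix (Fin (m+1)) (Fin (m+1)) ℤ :=
  Matrix.of fun k l => A k l + (if k = 0 then 0 else (-1 : ℤ)) * A 0 l

lemma rr_det (A : Matrix (Fin (m+1)) (Fin (m+1)) ℤ) : (rr A).det = A.det := by
  refine Matrix.det_eq_of_forall_row_eq_smul_add_const
    (fun k => if k = 0 then 0 else (-1 : ℤ)) 0 (by simp) (fun i j => rfl)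

/-- lower bound on |det| of a ±1 matrix -/
lemma det_lb (A : Matrix (Fin (m+1)) (Fin (m+1)) ℤ)
    (hA : ∀ k l, A k l = 1 ∨ A k l = -1) (hd : A.det ≠ 0) :
    (2 : ℤ) ^ m ≤ |A.det| := by
  classical
  set W : Matrix (Fin (m+1)) (Fin (m+1)) ℤ :=
    Matrix.of (fun k l => if k = 0 then A k l else (rr A) k l / 2) with hW
  have heven : ∀ k l, k ≠ 0 → (2 : ℤ) ∣ (rr A) k l := by
    intro k l hk
    have : (rr A) k l = A k l - A 0 l := by simp [rr, hk]; ring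
    rw [this]
    rcases hA k l with h1 | h1 <;> rcases hA 0 l with h2 | h2 <;> simp [h1, h2]
  have hDW : rr A = (Matrix.diagonal fun k : Fin (m+1) => if k = 0 then (1:ℤ) else 2) * W := by
    ext k l
    rw [Matrix.diagonal_mul]
    by_cases hk : k = 0
    · simp [hW, hk, rr]
    · rw [if_neg hk]
      show rr A k l = 2 * (if k = 0 then A k l else rr A k l / 2)
      rw [if_neg hk, Int.mul_ediv_cancel' (heven k l hk)]
  have hdiag : (Matrix.diagonal fun k : Fin (m+1) => if k = 0 then (1:ℤ) else 2).det = 2 ^ m := by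
    rw [Matrix.det_diagonal]
    rw [← Finset.prod_erase_mul _ _ (Finset.mem_univ (0 : Fin (m+1)))]
    rw [if_pos rfl, mul_one]
    rw [Finset.prod_congr rfl (fun k hk => if_neg (Finset.mem_erase.mp hk).1)]
    rw [Finset.prod_const, Finset.card_erase_of_mem (Finset.mem_univ _)]
    simp
  have hdet : A.det = 2 ^ m * W.det := by
    rw [← rr_det A, hDW, Matrix.det_mul, hdiag]
  have hW0 : W.det ≠ 0 := by
    intro h; exact hd (by rw [hdet, h, mul_zero])
  have : (1 : ℤ) ≤ |W.det| := Int.one_le_abs (by exact_mod_cast hW0)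
  calc (2:ℤ)^m = 2^m * 1 := by ring
    _ ≤ 2^m * |W.det| := by
        exact mul_le_mul_of_nonneg_left this (by positivity)
    _ = |A.det| := by rw [hdet, abs_mul, abs_pow]; simp

/-- upper bound on |det| of a ±1 matrix with one column replaced by ones -/
lemma det_ub (A : Matrix (Fin (m+1)) (Fin (m+1)) ℤ)
    (hA : ∀ k l, A k l = 1 ∨ A k l = -1) (c : Fin (m+1)) :
    |(A.updateCol c (fun _ => 1)).det| ≤ 2 ^ m * (Nat.factorial m : ℤ) := by
  classical
  set N := A.updateCol c (fun _ => (1:ℤ)) with hN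
  have hNc : ∀ k, N k c = 1 := by intro k; simp [hN, Matrix.updateCol_apply]
  have hNb : ∀ k l, |N k l| ≤ 1 := by
    intro k l
    by_cases h : l = c
    · rw [h, hNc]; norm_num
    · simp only [hN, Matrix.updateCol_apply, if_neg h]
      rcases hA k l with h1 | h1 <;> simp [h1]
  set E := rr N with hE
  have hEc : ∀ k, k ≠ 0 → E k c = 0 := by
    intro k hk; simp [hE, rr, hk, hNc]
  have hE0c : E 0 c = 1 := by simp [hE, rr, hNc]
  have hEb : ∀ k l, k ≠ 0 → |E k l| ≤ 2 := by
    intro k l hk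
    have : E k l = N k l - N 0 l := by simp [hE, rr, hk]; ring
    rw [this]
    calc |N k l - N 0 l| ≤ |N k l| + |N 0 l| := abs_sub _ _
      _ ≤ 2 := by have := hNb k l; have := hNb 0 l; omega
  have hdet : E.det = N.det := rr_det N
  rw [← hdet]
  rw [Matrix.det_succ_column E c]
  have hz : ∀ i : Fin (m+1), i ≠ 0 →
      (-1:ℤ) ^ ((i:ℕ) + (c:ℕ)) * E i c * (E.submatrix i.succAbove c.succAbove).det = 0 := by
    intro i hi; rw [hEc i hi]; ring
  rw [Finset.sum_eq_single 0 (fun i _ hi => hz i hi) (by simp)]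
  rw [hE0c]
  have hsub : ∀ i j, |(E.submatrix (Fin.succAbove 0) c.succAbove) i j| ≤ 2 := by
    intro i j
    apply hEb
    exact Fin.succAbove_ne 0 i
  have habs : |(-1:ℤ) ^ (((0:Fin (m+1)):ℕ) + (c:ℕ)) * 1 *
      (E.submatrix (Fin.succAbove 0) c.succAbove).det|
      = |(E.submatrix (Fin.succAbove 0) c.succAbove).det| := by
    rw [abs_mul, abs_mul, abs_pow, abs_neg, abs_one, one_pow, one_mul]; ring
  rw [habs]
  calc |(E.submatrix (Fin.succAbove 0) c.succAbove).det|
      ≤ (Nat.factorial m : ℤ) * 2 ^ m := leib _ (by norm_num) (fun i j => hsub i j)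
    _ = 2 ^ m * (Nat.factorial m : ℤ) := mul_comm _ _

end detbounds

lemma lemB {T d : ℕ} (v : Fin T → Fin d → ℝ) (J : Finset (Fin d)) :
    ∀ N : ℕ, ∀ x : Fin T → ℝ, (∀ i, 0 ≤ x i) → (∀ j ∈ J, 1 ≤ ∑ i, x i * v i j) →
    (Finset.univ.filter (fun i => x i ≠ 0)).card
      + (J.filter (fun j => ∑ i, x i * v i j ≠ 1)).card ≤ N →
    ∃ (y : Fin T → ℝ), (∀ i, 0 ≤ y i) ∧
      (∀ j ∈ J, 1 ≤ ∑ i, y i * v i j) ∧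
      ∃ (R : Finset (Fin d)), R ⊆ J ∧ (∀ j ∈ R, ∑ i, y i * v i j = 1) ∧
      LinearIndependent ℝ (fun i : {i // y i ≠ 0} => fun j : R => v i j) := by
  classical
  intro N
  induction N with
  | zero =>
    intro x hx0 hxf hμ
    refine ⟨x, hx0, hxf, J.filter (fun j => ∑ i, x i * v i j = 1), Finset.filter_subset _ _,
      fun j hj => (Finset.mem_filter.mp hj).2, ?_⟩
    have hempty : IsEmpty {i // x i ≠ 0} := by
      constructor
      rintro ⟨i, hi⟩
      have : i ∈ Finset.univ.filter (fun i => x i ≠ 0) := by simp [hi]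
      have h1 : 0 < (Finset.univ.filter (fun i => x i ≠ 0)).card :=
        Finset.card_pos.mpr ⟨i, this⟩
      omega
    exact linearIndependent_empty_type
  | succ N IH =>
    intro x hx0 hxf hμ
    set R := J.filter (fun j => ∑ i, x i * v i j = 1) with hRdef
    by_cases hli : LinearIndependent ℝ (fun i : {i // x i ≠ 0} => fun j : R => v i j)
    · exact ⟨x, hx0, hxf, R, Finset.filter_subset _ _,
        fun j hj => (Finset.mem_filter.mp hj).2, hli⟩
    -- extract a dependence c supported on supp x, vanishing on tight rows R
    obtain ⟨g, hg0, i₀, hgi₀⟩ := Fintype.not_linearIndependent_iff.mp hli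
    set c₀ : Fin T → ℝ := fun i => if h : x i = 0 then 0 else g ⟨i, h⟩ with hc₀def
    have hc₀supp : ∀ i, x i = 0 → c₀ i = 0 := fun i hi => by simp [hc₀def, hi]
    have hc₀sum : ∀ j ∈ R, ∑ i, c₀ i * v i j = 0 := by
      intro j hj
      have h1 := congrFun hg0 ⟨j, hj⟩
      rw [Finset.sum_apply] at h1
      simp only [Pi.smul_apply, smul_eq_mul, Pi.zero_apply] at h1
      have h2 : ∑ i, c₀ i * v i j
          = ∑ i ∈ Finset.univ.filter (fun i => x i ≠ 0), c₀ i * v i j := by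
        refine (Finset.sum_subset (Finset.filter_subset _ _) ?_).symm
        intro i _ hi
        have : x i = 0 := by
          by_contra h; exact hi (by simp [h])
        rw [hc₀supp i this, zero_mul]
      have h3 : ∑ i ∈ Finset.univ.filter (fun i => x i ≠ 0), c₀ i * v i j
          = ∑ a : {i // x i ≠ 0}, c₀ ↑a * v (↑a) j :=
        Finset.sum_subtype _ (by intro i; simp) _
      have h4 : ∀ a : {i // x i ≠ 0}, c₀ ↑a * v (↑a) j = g a * v (↑a) j := by
        intro a
        have : c₀ ↑a = g a := by simp only [hc₀def]; rw [dif_neg a.2]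
        rw [this]
      rw [h2, h3, Finset.sum_congr rfl (fun a _ => h4 a), h1]
    have hc₀ne : c₀ ↑i₀ ≠ 0 := by
      have : c₀ ↑i₀ = g i₀ := by simp only [hc₀def]; rw [dif_neg i₀.2]
      rw [this]; exact hgi₀
    -- WLOG some coordinate is negative
    obtain ⟨c, hcsupp, hcsum, ineg, hineg⟩ :
        ∃ c : Fin T → ℝ, (∀ i, x i = 0 → c i = 0) ∧ (∀ j ∈ R, ∑ i, c i * v i j = 0) ∧
          ∃ i, c i < 0 := by
      by_cases hneg : ∃ i, c₀ i < 0
      · obtain ⟨i, hi⟩ := hneg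
        exact ⟨c₀, hc₀supp, hc₀sum, i, hi⟩
      · push_neg at hneg
        refine ⟨fun i => -c₀ i, fun i hi => by show -c₀ i = 0; rw [hc₀supp i hi, neg_zero],
          fun j hj => ?_, ↑i₀, ?_⟩
        · have := hc₀sum j hj
          calc ∑ i, -c₀ i * v i j = -∑ i, c₀ i * v i j := by
                rw [← Finset.sum_neg_distrib]
                exact Finset.sum_congr rfl fun i _ => by ring
            _ = 0 := by rw [this, neg_zero]
        · have := hneg ↑i₀
          have h2 : 0 < c₀ ↑i₀ := lt_of_le_of_ne this (Ne.symm hc₀ne)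
          show -c₀ ↑i₀ < 0
          linarith
    -- step size
    set slope : Fin d → ℝ := fun j => ∑ i, c i * v i j with hslopedef
    set rowv : Fin d → ℝ := fun j => ∑ i, x i * v i j with hrowdef
    set FA : Finset ℝ :=
      (Finset.univ.filter (fun i => c i < 0)).image (fun i => x i / (-c i)) with hFAdef
    set FB : Finset ℝ :=
      (J.filter (fun j => rowv j ≠ 1 ∧ slope j < 0)).image
        (fun j => (rowv j - 1) / (-slope j)) with hFBdef
    have hFne : (FA ∪ FB).Nonempty := by
      refine ⟨x ineg / (-c ineg), Finset.mem_union_left _ ?_⟩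
      exact Finset.mem_image.mpr ⟨ineg, by simp [hineg], rfl⟩
    set t₀ : ℝ := (FA ∪ FB).min' hFne with ht₀def
    have hcslope : ∀ j ∈ R, slope j = 0 := hcsum
    have hrowxf : ∀ j ∈ J, 1 ≤ rowv j := hxf
    have hxpos : ∀ i, c i < 0 → 0 < x i := by
      intro i hi
      rcases lt_or_eq_of_le (hx0 i) with h | h
      · exact h
      · exact absurd (hcsupp i h.symm) (by intro h2; rw [h2] at hi; exact lt_irrefl 0 hi)
    have hrowgt : ∀ j ∈ J, rowv j ≠ 1 → 1 < rowv j :=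
      fun j hj hne => lt_of_le_of_ne (hxf j hj) (Ne.symm hne)
    have hpos : ∀ t ∈ FA ∪ FB, 0 < t := by
      intro t ht
      rcases Finset.mem_union.mp ht with h | h
      · obtain ⟨i, hi, rfl⟩ := Finset.mem_image.mp h
        have hi' : c i < 0 := (Finset.mem_filter.mp hi).2
        exact div_pos (hxpos i hi') (by linarith)
      · obtain ⟨j, hj, rfl⟩ := Finset.mem_image.mp h
        obtain ⟨hjJ, hne, hlt⟩ := Finset.mem_filter.mp hj
        exact div_pos (by linarith [hrowgt j hjJ hne]) (by linarith)
    have ht₀pos : 0 < t₀ := hpos _ ((FA ∪ FB).min'_mem hFne)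
    set x' : Fin T → ℝ := fun i => x i + t₀ * c i with hx'def
    have hx'0 : ∀ i, 0 ≤ x' i := by
      intro i
      by_cases h : c i < 0
      · have hmem : x i / (-c i) ∈ FA ∪ FB :=
          Finset.mem_union_left _ (Finset.mem_image.mpr ⟨i, by simp [h], rfl⟩)
        have := Finset.min'_le _ _ hmem
        have h2 : t₀ * (-c i) ≤ x i := by
          rw [← le_div_iff₀ (by linarith : (0:ℝ) < -c i)]
          exact this
        simp only [hx'def]
        nlinarith
      · push_neg at h
        exact add_nonneg (hx0 i) (mul_nonneg ht₀pos.le h)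
    have hrow' : ∀ j, ∑ i, x' i * v i j = rowv j + t₀ * slope j := by
      intro j
      simp only [hx'def, hrowdef, hslopedef]
      rw [Finset.mul_sum, ← Finset.sum_add_distrib]
      exact Finset.sum_congr rfl fun i _ => by ring
    have hRtight : ∀ j ∈ R, rowv j = 1 := fun j hj => (Finset.mem_filter.mp hj).2
    have htight' : ∀ j ∈ R, ∑ i, x' i * v i j = 1 := by
      intro j hj
      rw [hrow', hcslope j hj, mul_zero, add_zero]
      exact hRtight j hj
    have hx'f : ∀ j ∈ J, 1 ≤ ∑ i, x' i * v i j := by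
      intro j hj
      rw [hrow']
      by_cases hjR : j ∈ R
      · rw [hcslope j hjR, mul_zero, add_zero]; exact (hRtight j hjR).ge
      · have hne : rowv j ≠ 1 := by
          intro h; exact hjR (Finset.mem_filter.mpr ⟨hj, h⟩)
        by_cases hs : slope j < 0
        · have hmem : (rowv j - 1) / (-slope j) ∈ FA ∪ FB :=
            Finset.mem_union_right _
              (Finset.mem_image.mpr ⟨j, Finset.mem_filter.mpr ⟨hj, hne, hs⟩, rfl⟩)
          have h1 := Finset.min'_le _ _ hmem
          have h2 : t₀ * (-slope j) ≤ rowv j - 1 := by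
            rw [← le_div_iff₀ (by linarith : (0:ℝ) < -slope j)]
            exact h1
          nlinarith
        · push_neg at hs
          nlinarith [hrowgt j hj hne, mul_nonneg ht₀pos.le hs]
    have hsupp' : ∀ i, x i = 0 → x' i = 0 := by
      intro i hi
      simp only [hx'def]
      rw [hi, hcsupp i hi, mul_zero, add_zero]
    have hsuppsub : Finset.univ.filter (fun i => x' i ≠ 0)
        ⊆ Finset.univ.filter (fun i => x i ≠ 0) := by
      intro i hi
      simp only [Finset.mem_filter, Finset.mem_univ, true_and] at *
      intro h; exact hi (hsupp' i h)
    have hslacksub : J.filter (fun j => ∑ i, x' i * v i j ≠ 1)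
        ⊆ J.filter (fun j => ∑ i, x i * v i j ≠ 1) := by
      intro j hj
      rw [Finset.mem_filter] at *
      refine ⟨hj.1, fun h => hj.2 ?_⟩
      exact htight' j (Finset.mem_filter.mpr ⟨hj.1, h⟩)
    -- the new measure strictly decreases
    have hdec : (Finset.univ.filter (fun i => x' i ≠ 0)).card
        + (J.filter (fun j => ∑ i, x' i * v i j ≠ 1)).card ≤ N := by
      rcases Finset.mem_union.mp ((FA ∪ FB).min'_mem hFne) with h | h
      · -- a support element dies
        obtain ⟨i₁, hi₁mem, ht⟩ := Finset.mem_image.mp h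
        have hi₁ : c i₁ < 0 := (Finset.mem_filter.mp hi₁mem).2
        have hx'i₁ : x' i₁ = 0 := by
          have ht' : t₀ = x i₁ / -c i₁ := by rw [ht₀def, ← ht]
          have hc : c i₁ ≠ 0 := ne_of_lt hi₁
          show x i₁ + t₀ * c i₁ = 0
          rw [ht']
          rw [div_mul_eq_mul_div, mul_comm, ← div_mul_eq_mul_div, div_neg, div_self hc]
          ring
        have hss : Finset.univ.filter (fun i => x' i ≠ 0)
            ⊂ Finset.univ.filter (fun i => x i ≠ 0) := by
          refine Finset.ssubset_iff_of_subset hsuppsub |>.mpr ⟨i₁, ?_, ?_⟩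
          · simp [(hxpos i₁ hi₁).ne']
          · simp [hx'i₁]
        have h1 := Finset.card_lt_card hss
        have h2 := Finset.card_le_card hslacksub
        omega
      · -- a slack row becomes tight
        obtain ⟨j₁, hj₁mem, ht⟩ := Finset.mem_image.mp h
        obtain ⟨hj₁J, hj₁ne, hj₁s⟩ := Finset.mem_filter.mp hj₁mem
        have hrow'j₁ : ∑ i, x' i * v i j₁ = 1 := by
          rw [hrow']
          have hs0 : slope j₁ ≠ 0 := ne_of_lt hj₁s
          have ht' : t₀ = (rowv j₁ - 1) / -slope j₁ := by rw [ht₀def, ← ht]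
          rw [ht']
          rw [div_mul_eq_mul_div, mul_comm, ← div_mul_eq_mul_div, div_neg, div_self hs0]
          ring
        have hss : J.filter (fun j => ∑ i, x' i * v i j ≠ 1)
            ⊂ J.filter (fun j => ∑ i, x i * v i j ≠ 1) := by
          refine Finset.ssubset_iff_of_subset hslacksub |>.mpr ⟨j₁, ?_, ?_⟩
          · exact Finset.mem_filter.mpr ⟨hj₁J, hj₁ne⟩
          · simp [hrow'j₁]
        have h1 := Finset.card_lt_card hss
        have h2 := Finset.card_le_card hsuppsub
        omega
    exact IH x' hx'0 hx'f hdec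

lemma lemC {T d : ℕ} (B : Fin T → Fin d → ℤ) (hB : ∀ i j, B i j = 1 ∨ B i j = -1)
    (y : Fin T → ℝ) (hy0 : ∀ i, 0 ≤ y i) (R : Finset (Fin d))
    (htight : ∀ j ∈ R, ∑ i, y i * (B i j : ℝ) = 1)
    (hind : LinearIndependent ℝ (fun i : {i // y i ≠ 0} => fun j : R => (B i j : ℝ))) :
    ∑ i, y i ≤ (Nat.factorial R.card : ℝ) := by
  classical
  by_cases htriv : ∀ i, y i = 0
  · have : ∑ i, y i = 0 := Finset.sum_eq_zero fun i _ => htriv i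
    rw [this]
    positivity
  push_neg at htriv
  -- the subtype of support indices
  have hsum0 : ∀ j : Fin d, ∑ i, y i * (B i j : ℝ)
      = ∑ i : {i // y i ≠ 0}, y ↑i * (B ↑i j : ℝ) := by
    intro j
    rw [← Finset.sum_subtype (Finset.univ.filter (fun i => y i ≠ 0))
      (fun i => by simp) (fun i => y i * (B i j : ℝ))]
    refine (Finset.sum_subset (Finset.filter_subset _ _) ?_).symm
    intro i _ hi
    have : y i = 0 := by by_contra h; exact hi (by simp [h])
    rw [this, zero_mul]
  have hysum : ∑ i, y i = ∑ i : {i // y i ≠ 0}, y ↑i := by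
    rw [← Finset.sum_subtype (Finset.univ.filter (fun i => y i ≠ 0))
      (fun i => by simp) (fun i => y i)]
    refine (Finset.sum_subset (Finset.filter_subset _ _) ?_).symm
    intro i _ hi
    by_contra h
    exact hi (Finset.mem_filter.mpr ⟨Finset.mem_univ _, h⟩)
  set ι := {i // y i ≠ 0} with hιdef
  set m₀ := Fintype.card ι with hm₀def
  -- m₀ ≤ R.card
  have hm₀R : m₀ ≤ R.card := by
    have h1 := hind.fintype_card_le_finrank
    rwa [Module.finrank_pi, Fintype.card_coe] at h1
  -- select a square subsystem
  set row : Fin d → (ι → ℝ) := fun j => fun i => (B ↑i j : ℝ) with hrowdef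
  obtain ⟨bs, hbs_sub, hbs_span, hbs_ind⟩ := exists_linearIndependent ℝ (row '' ↑R)
  have hm₀pos : 0 < m₀ := by
    obtain ⟨i, hi⟩ := htriv
    exact Fintype.card_pos_iff.mpr ⟨⟨i, hi⟩⟩
  have hRne : R.Nonempty := by
    rcases R.eq_empty_or_nonempty with h | h
    · exfalso
      have : (m₀ : ℕ) ≤ 0 := by rw [← Finset.card_empty (α := Fin d), ← h]; exact hm₀R
      omega
    · exact h
  obtain ⟨j₀, hj₀⟩ := hRne
  set pick : (ι → ℝ) → Fin d :=
    fun w => if h : ∃ j ∈ R, row j = w then h.choose else j₀ with hpickdef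
  have hpick : ∀ w ∈ bs, pick w ∈ R ∧ row (pick w) = w := by
    intro w hw
    have hex : ∃ j ∈ R, row j = w := by
      obtain ⟨j, hj, rfl⟩ := hbs_sub hw
      exact ⟨j, hj, rfl⟩
    rw [hpickdef]
    simp only [dif_pos hex]
    exact ⟨hex.choose_spec.1, hex.choose_spec.2⟩
  have hbsfin : bs.Finite := (R.finite_toSet.image row).subset hbs_sub
  set R' : Finset (Fin d) := hbsfin.toFinset.image pick with hR'def
  have hR'sub : R' ⊆ R := by
    intro j hj
    obtain ⟨w, hw, rfl⟩ := Finset.mem_image.mp hj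
    exact (hpick w (hbsfin.mem_toFinset.mp hw)).1
  have hrowR' : ∀ j ∈ R', row j ∈ bs ∧ pick (row j) = j := by
    intro j hj
    obtain ⟨w, hw, rfl⟩ := Finset.mem_image.mp hj
    have hw' := hbsfin.mem_toFinset.mp hw
    have := (hpick w hw').2
    rw [this]
    exact ⟨hw', rfl⟩
  -- every row of R is in the span of bs
  have hspan : ∀ j ∈ R, row j ∈ Submodule.span ℝ bs := by
    intro j hj
    rw [hbs_span]
    exact Submodule.subset_span ⟨j, hj, rfl⟩
  -- columns restricted to R' remain linearly independent
  have hcol' : LinearIndependent ℝ (fun i : ι => fun j : R' => (B ↑i ↑j : ℝ)) := by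
    rw [Fintype.linearIndependent_iff]
    intro g hg
    have hgR' : ∀ j ∈ R', ∑ i : ι, g i * (B ↑i j : ℝ) = 0 := by
      intro j hj
      have := congrFun hg ⟨j, hj⟩
      rw [Finset.sum_apply] at this
      simpa using this
    set φ : (ι → ℝ) →ₗ[ℝ] ℝ :=
      ∑ i : ι, g i • (LinearMap.proj i : ((ι → ℝ) →ₗ[ℝ] ℝ)) with hφdef
    have hφ : ∀ w : ι → ℝ, φ w = ∑ i : ι, g i * w i := by
      intro w
      rw [hφdef, LinearMap.sum_apply]
      simp
    have hker : ∀ w ∈ bs, w ∈ LinearMap.ker φ := by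
      intro w hw
      have h1 : pick w ∈ R' :=
        Finset.mem_image.mpr ⟨w, hbsfin.mem_toFinset.mpr hw, rfl⟩
      have h2 := hgR' (pick w) h1
      have h3 : ∀ i : ι, (B ↑i (pick w) : ℝ) = w i :=
        fun i => congrFun (hpick w hw).2 i
      rw [LinearMap.mem_ker, hφ]
      have h4 : ∑ i : ι, g i * w i = ∑ i : ι, g i * (B ↑i (pick w) : ℝ) :=
        Finset.sum_congr rfl fun i _ => by rw [h3 i]
      rw [h4]; exact h2
    have hspanker : Submodule.span ℝ bs ≤ LinearMap.ker φ :=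
      Submodule.span_le.mpr hker
    have hgR : ∀ j ∈ R, ∑ i : ι, g i * (B ↑i j : ℝ) = 0 := by
      intro j hj
      have := hspanker (hspan j hj)
      rw [LinearMap.mem_ker, hφ] at this
      exact this
    -- now use the original independence
    have := Fintype.linearIndependent_iff.mp hind g ?_
    · exact this
    · funext j
      rw [Finset.sum_apply]
      simpa using hgR ↑j j.2
  -- rows of R' are linearly independent
  have hrow' : LinearIndependent ℝ (fun j : R' => row ↑j) := by
    have hf : ∀ j : R', row ↑j ∈ bs := fun j => (hrowR' ↑j j.2).1
    have hinj : Function.Injective (fun j : R' => (⟨row ↑j, hf j⟩ : bs)) := by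
      intro j j' h
      have h2 : row ↑j = row ↑j' := congrArg Subtype.val h
      have h3 := (hrowR' ↑j j.2).2
      have h4 := (hrowR' ↑j' j'.2).2
      apply Subtype.ext
      rw [← h3, ← h4, h2]
    exact hbs_ind.comp (fun j : R' => (⟨row ↑j, hf j⟩ : bs)) hinj
  have hcard : R'.card = m₀ := by
    refine le_antisymm ?_ ?_
    · have h1 := hrow'.fintype_card_le_finrank
      rwa [Module.finrank_pi, Fintype.card_coe] at h1
    · have h1 := hcol'.fintype_card_le_finrank
      rwa [Module.finrank_pi, Fintype.card_coe] at h1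
  -- set up the square linear system
  obtain ⟨m, hm⟩ : ∃ m, m₀ = m + 1 := ⟨m₀ - 1, by omega⟩
  have hcardι : Fintype.card ι = m + 1 := by rw [← hm₀def, hm]
  have hcardR' : Fintype.card R' = m + 1 := by rw [Fintype.card_coe, hcard, hm]
  set eι : Fin (m+1) ≃ ι := (Fintype.equivFinOfCardEq hcardι).symm with heιdef
  set eR : Fin (m+1) ≃ R' := (Fintype.equivFinOfCardEq hcardR').symm with heRdef
  set Mz : Matrix (Fin (m+1)) (Fin (m+1)) ℤ :=
    Matrix.of fun k l => B ↑(eι l) ↑(eR k) with hMzdef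
  have hMz : ∀ k l, Mz k l = 1 ∨ Mz k l = -1 := fun k l => hB _ _
  set Mr : Matrix (Fin (m+1)) (Fin (m+1)) ℝ := Mz.map (fun z : ℤ => (z : ℝ)) with hMrdef
  set Y : Fin (m+1) → ℝ := fun l => y ↑(eι l) with hYdef
  have hsys : Mr *ᵥ Y = fun _ => (1:ℝ) := by
    funext k
    show ∑ l, Mr k l * Y l = 1
    have h1 := htight ↑(eR k) (hR'sub (eR k).2)
    rw [hsum0] at h1
    rw [← Equiv.sum_comp eι (fun i : ι => y ↑i * (B ↑i ↑(eR k) : ℝ))] at h1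
    rw [← h1]
    exact Finset.sum_congr rfl fun l _ => by
      show (Mz k l : ℝ) * Y l = _
      rw [hMzdef]
      simp only [Matrix.of_apply, hYdef]
      ring
  have hdetcast : (Mz.det : ℝ) = Mr.det := by
    rw [hMrdef]
    exact RingHom.map_det (Int.castRingHom ℝ) Mz
  have hdet0 : Mz.det ≠ 0 := by
    intro h0
    have hMr0 : Mr.det = 0 := by rw [← hdetcast, h0, Int.cast_zero]
    obtain ⟨u, hu0, huv⟩ := Matrix.exists_mulVec_eq_zero_iff.mpr hMr0
    set g : ι → ℝ := fun i => u (eι.symm i) with hgdef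
    have hg := Fintype.linearIndependent_iff.mp hcol' g ?_
    · apply hu0
      funext l
      have := hg (eι l)
      rw [hgdef] at this
      simpa using this
    · funext j
      rw [Finset.sum_apply]
      have hk := congrFun huv (eR.symm j)
      show ∑ i : ι, g i • (B ↑i ↑j : ℝ) = 0
      have h2 : ∑ l, Mr (eR.symm j) l * u l = 0 := hk
      rw [← Equiv.sum_comp eι (fun i : ι => g i • (B ↑i ↑j : ℝ))]
      refine Eq.trans (Finset.sum_congr rfl fun l _ => ?_) h2
      show g (eι l) • (B ↑(eι l) ↑j : ℝ) = (Mz (eR.symm j) l : ℝ) * u l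
      rw [hgdef]
      simp only [Equiv.symm_apply_apply, hMzdef, Matrix.of_apply,
        Equiv.apply_symm_apply, smul_eq_mul]
      ring
  have hMrdet0 : Mr.det ≠ 0 := by
    rw [← hdetcast]
    exact_mod_cast hdet0
  -- Cramer's rule
  have hYc : Mr.det • Y = Matrix.cramer Mr (fun _ => (1:ℝ)) := by
    by_contra hne
    have hdiff : Mr *ᵥ (Mr.det • Y - Matrix.cramer Mr (fun _ => (1:ℝ))) = 0 := by
      rw [Matrix.mulVec_sub, Matrix.mulVec_smul, hsys, Matrix.mulVec_cramer]
      funext k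
      simp
    have := Matrix.exists_mulVec_eq_zero_iff.mp
      ⟨_, sub_ne_zero.mpr hne, hdiff⟩
    exact hMrdet0 this
  have hY : ∀ l, Y l ≤ (Nat.factorial m : ℝ) := by
    intro l
    have h1 : Mr.det * Y l = (Mr.updateCol l (fun _ => (1:ℝ))).det := by
      have := congrFun hYc l
      rw [Pi.smul_apply, smul_eq_mul] at this
      rw [this, Matrix.cramer_apply]
    have hnum : (Mr.updateCol l (fun _ => (1:ℝ))).det
        = (((Mz.updateCol l (fun _ => (1:ℤ))).det : ℤ) : ℝ) := by
      have h2 : (Mz.updateCol l (fun _ => (1:ℤ))).map (fun z : ℤ => (z:ℝ))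
          = Mr.updateCol l (fun _ => (1:ℝ)) := by
        rw [Matrix.map_updateCol]
        have hcol1 : ((fun z : ℤ => (z:ℝ)) ∘ (fun _ : Fin (m+1) => (1:ℤ)))
            = fun _ : Fin (m+1) => (1:ℝ) := by funext; simp
        rw [hcol1]
      rw [← h2]
      exact (RingHom.map_det (Int.castRingHom ℝ) _).symm
    have hlbz := det_lb Mz hMz hdet0
    have hubz := det_ub Mz hMz l
    have hlb : (2:ℝ)^m ≤ |Mr.det| := by
      rw [← hdetcast, ← Int.cast_abs]
      exact_mod_cast hlbz
    have hub : |Mr.det * Y l| ≤ 2^m * (Nat.factorial m : ℝ) := by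
      rw [h1, hnum, ← Int.cast_abs]
      exact_mod_cast hubz
    have hYl0 : 0 ≤ Y l := hy0 _
    have h3 : |Mr.det| * Y l ≤ 2^m * (Nat.factorial m : ℝ) := by
      rw [← abs_of_nonneg hYl0, ← abs_mul]
      exact hub
    nlinarith [abs_nonneg Mr.det, pow_pos (by norm_num : (0:ℝ) < 2) m]
  have hfinal : ∑ i, y i = ∑ l, Y l := by
    rw [hysum, ← Equiv.sum_comp eι (fun i : ι => y ↑i)]
  rw [hfinal]
  calc ∑ l, Y l ≤ ∑ _l : Fin (m+1), (Nat.factorial m : ℝ) :=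
        Finset.sum_le_sum fun l _ => hY l
    _ = (m+1) * (Nat.factorial m : ℝ) := by
        rw [Finset.sum_const, Finset.card_univ, Fintype.card_fin, nsmul_eq_mul]
        push_cast; ring
    _ = (Nat.factorial (m+1) : ℝ) := by rw [Nat.factorial_succ]; push_cast; ring
    _ ≤ (Nat.factorial R.card : ℝ) := by
        have : m + 1 ≤ R.card := by omega
        exact_mod_cast Nat.factorial_le this

/-- **Local optima of ℓ₂ local search on `{±1}ⁿ` vectors have discrepancy `n^{O(n)}`,
independent of `T`.** If `S = ∑ᵢ aᵢ` and `⟨S, aᵢ⟩ ≤ n` for all `i` (local optimality of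
the all-ones signing), then `‖S‖_∞ ≤ n·n'·(n'−1)^{n'−1}` for some `n' ≤ n`. -/
theorem stmt10 (n T : ℕ) (a : Fin T → Fin n → ℤ)
    (ha : ∀ i j, a i j = 1 ∨ a i j = -1)
    (hopt : ∀ i : Fin T, (∑ j : Fin n, (∑ i' : Fin T, a i' j) * a i j) ≤ (n : ℤ)) :
    ∃ n' : ℕ, n' ≤ n ∧
      ∀ j : Fin n, |((∑ i : Fin T, a i j : ℤ) : ℝ)|
        ≤ (n : ℝ) * (n' : ℝ) * ((n' : ℝ) - 1) ^ (n' - 1) := by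
  classical
  refine ⟨n, le_refl n, fun j₀ => ?_⟩
  have hn : 0 < n := j₀.pos
  set S : Fin n → ℤ := fun j => ∑ i, a i j with hSdef
  set ε : Fin n → ℤ := fun j => if 0 ≤ S j then 1 else -1 with hεdef
  set b : Fin T → Fin n → ℤ := fun i j => ε j * a i j with hbdef
  have hb : ∀ i j, b i j = 1 ∨ b i j = -1 := by
    intro i j
    rcases ha i j with h | h <;> by_cases h2 : 0 ≤ S j <;>
      simp [hbdef, hεdef, h, h2]
  have hεS : ∀ j, ε j * S j = |S j| := by
    intro j
    by_cases h2 : 0 ≤ S j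
    · rw [hεdef]; simp [h2, abs_of_nonneg h2]
    · rw [hεdef]; simp only [if_neg h2]
      push_neg at h2
      rw [abs_of_neg h2]; ring
  have hbsum : ∀ j, ∑ i, b i j = |S j| := by
    intro j
    rw [hbdef]
    show ∑ i, ε j * a i j = |S j|
    rw [← Finset.mul_sum]
    exact hεS j
  have hopt' : ∀ i, ∑ j, |S j| * b i j ≤ (n : ℤ) := by
    intro i
    have h1 : ∀ j, |S j| * b i j = S j * a i j := by
      intro j
      rw [hbdef]
      show |S j| * (ε j * a i j) = _
      rw [← hεS j]
      have hε2 : ε j * ε j = 1 := by rw [hεdef]; by_cases h2 : 0 ≤ S j <;> simp [h2]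
      calc ε j * S j * (ε j * a i j) = (ε j * ε j) * (S j * a i j) := by ring
        _ = S j * a i j := by rw [hε2, one_mul]
    rw [Finset.sum_congr rfl fun j _ => h1 j]
    exact hopt i
  set J : Finset (Fin n) := Finset.univ.filter (fun j => S j ≠ 0) with hJdef
  have hfeas : ∀ j ∈ J, 1 ≤ ∑ i : Fin T, (1:ℝ) * ((b i j : ℤ) : ℝ) := by
    intro j hj
    have hSj : S j ≠ 0 := (Finset.mem_filter.mp hj).2
    have h1 : (1 : ℤ) ≤ |S j| := Int.one_le_abs hSj
    have h2 : ∑ i : Fin T, (1:ℝ) * ((b i j : ℤ) : ℝ) = ((|S j| : ℤ) : ℝ) := by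
      rw [← hbsum j]
      push_cast
      simp
    rw [h2]
    exact_mod_cast h1
  obtain ⟨y, hy0, hyf, R, hRJ, hRt, hli⟩ :=
    lemB (fun i j => ((b i j : ℤ) : ℝ)) J
      ((Finset.univ.filter (fun i => (1:ℝ) ≠ 0)).card
        + (J.filter (fun j => ∑ i : Fin T, (1:ℝ) * ((b i j : ℤ) : ℝ) ≠ 1)).card)
      (fun _ => 1) (fun _ => zero_le_one) hfeas le_rfl
  have hC := lemC b hb y hy0 R hRt hli
  -- the main chain of inequalities
  have hj₀ : j₀ ∈ J ∨ S j₀ = 0 := by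
    by_cases h : S j₀ = 0
    · exact Or.inr h
    · exact Or.inl (Finset.mem_filter.mpr ⟨Finset.mem_univ _, h⟩)
  have hRHS : ((Nat.factorial R.card : ℕ) : ℝ) ≤ (n:ℝ) * ((n:ℝ) - 1) ^ (n - 1) := by
    have hRn : R.card ≤ n := le_trans (Finset.card_le_card hRJ)
      (le_trans (Finset.card_le_card (Finset.filter_subset _ _)) (by simp))
    have h1 : Nat.factorial R.card ≤ Nat.factorial n := Nat.factorial_le hRn
    have h2 : Nat.factorial n = n * Nat.factorial (n-1) := by
      obtain ⟨k, rfl⟩ : ∃ k, n = k + 1 := ⟨n - 1, by omega⟩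
      simp [Nat.factorial_succ]
    have h3 : Nat.factorial (n-1) ≤ (n-1)^(n-1) := Nat.factorial_le_pow _
    have h4 : Nat.factorial R.card ≤ n * (n-1)^(n-1) := by
      calc Nat.factorial R.card ≤ Nat.factorial n := h1
        _ = n * Nat.factorial (n-1) := h2
        _ ≤ n * (n-1)^(n-1) := Nat.mul_le_mul_left _ h3
    have h5 : (((n:ℕ) - 1 : ℕ) : ℝ) = (n:ℝ) - 1 := by
      have : (1:ℕ) ≤ n := hn
      push_cast [this]
      ring
    calc ((Nat.factorial R.card : ℕ) : ℝ) ≤ ((n * (n-1)^(n-1) : ℕ) : ℝ) := by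
          exact_mod_cast h4
      _ = (n:ℝ) * ((n:ℝ) - 1)^(n-1) := by push_cast [h5]; ring
  rcases hj₀ with hj₀ | hS0
  · -- main case
    have hstep1 : ((|S j₀| : ℤ) : ℝ)
        ≤ ∑ j ∈ J, ((|S j| : ℤ) : ℝ) * (∑ i, y i * ((b i j : ℤ) : ℝ)) := by
      have hterm : ∀ j ∈ J, 0 ≤ ((|S j| : ℤ) : ℝ) * (∑ i, y i * ((b i j : ℤ) : ℝ)) := by
        intro j hj
        have := hyf j hj
        have habs : (0:ℝ) ≤ ((|S j| : ℤ) : ℝ) := by positivity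
        nlinarith
      have hj₀term : ((|S j₀| : ℤ) : ℝ)
          ≤ ((|S j₀| : ℤ) : ℝ) * (∑ i, y i * ((b i j₀ : ℤ) : ℝ)) := by
        have h1 := hyf j₀ hj₀
        have habs : (0:ℝ) ≤ ((|S j₀| : ℤ) : ℝ) := by positivity
        nlinarith
      calc ((|S j₀| : ℤ) : ℝ)
          ≤ ((|S j₀| : ℤ) : ℝ) * (∑ i, y i * ((b i j₀ : ℤ) : ℝ)) := hj₀term
        _ ≤ ∑ j ∈ J, ((|S j| : ℤ) : ℝ) * (∑ i, y i * ((b i j : ℤ) : ℝ)) :=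
            Finset.single_le_sum hterm hj₀
    have hstep2 : ∑ j ∈ J, ((|S j| : ℤ) : ℝ) * (∑ i, y i * ((b i j : ℤ) : ℝ))
        = ∑ j, ((|S j| : ℤ) : ℝ) * (∑ i, y i * ((b i j : ℤ) : ℝ)) := by
      refine Finset.sum_subset (Finset.subset_univ _) ?_
      intro j _ hj
      have : S j = 0 := by
        by_contra h
        exact hj (Finset.mem_filter.mpr ⟨Finset.mem_univ _, h⟩)
      rw [this]
      simp
    have hstep3 : ∑ j, ((|S j| : ℤ) : ℝ) * (∑ i, y i * ((b i j : ℤ) : ℝ))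
        = ∑ i, y i * (∑ j, ((|S j| : ℤ) : ℝ) * ((b i j : ℤ) : ℝ)) := by
      have h1 : ∀ j : Fin n, ((|S j| : ℤ) : ℝ) * (∑ i, y i * ((b i j : ℤ) : ℝ))
          = ∑ i, y i * (((|S j| : ℤ) : ℝ) * ((b i j : ℤ) : ℝ)) := by
        intro j
        rw [Finset.mul_sum]
        exact Finset.sum_congr rfl fun i _ => by ring
      rw [Finset.sum_congr rfl fun j _ => h1 j, Finset.sum_comm]
      refine Finset.sum_congr rfl fun i _ => ?_
      rw [Finset.mul_sum]
    have hstep4 : ∑ i, y i * (∑ j, ((|S j| : ℤ) : ℝ) * ((b i j : ℤ) : ℝ))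
        ≤ ∑ i, y i * (n : ℝ) := by
      refine Finset.sum_le_sum fun i _ => ?_
      refine mul_le_mul_of_nonneg_left ?_ (hy0 i)
      have h1 : ∑ j, ((|S j| : ℤ) : ℝ) * ((b i j : ℤ) : ℝ)
          = ((∑ j, |S j| * b i j : ℤ) : ℝ) := by push_cast; ring_nf
      rw [h1]
      exact_mod_cast hopt' i
    have hstep5 : ∑ i, y i * (n : ℝ) ≤ (n:ℝ) * (Nat.factorial R.card : ℝ) := by
      rw [← Finset.sum_mul]
      calc (∑ i, y i) * (n:ℝ) ≤ (Nat.factorial R.card : ℝ) * (n:ℝ) := by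
            refine mul_le_mul_of_nonneg_right hC (by positivity)
        _ = (n:ℝ) * (Nat.factorial R.card : ℝ) := mul_comm _ _
    have hmain : ((|S j₀| : ℤ) : ℝ) ≤ (n:ℝ) * (Nat.factorial R.card : ℝ) := by
      calc ((|S j₀| : ℤ) : ℝ) ≤ _ := hstep1
        _ = _ := hstep2
        _ = _ := hstep3
        _ ≤ _ := hstep4
        _ ≤ _ := hstep5
    have hfin : ((|S j₀| : ℤ) : ℝ) ≤ (n : ℝ) * ((n:ℝ) * ((n:ℝ) - 1)^(n-1)) := by
      calc ((|S j₀| : ℤ) : ℝ) ≤ (n:ℝ) * (Nat.factorial R.card : ℝ) := hmain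
        _ ≤ (n : ℝ) * ((n:ℝ) * ((n:ℝ) - 1)^(n-1)) := by
            refine mul_le_mul_of_nonneg_left hRHS (by positivity)
    show |((S j₀ : ℤ) : ℝ)| ≤ (n : ℝ) * (n : ℝ) * ((n : ℝ) - 1) ^ (n - 1)
    rw [← Int.cast_abs]
    calc ((|S j₀| : ℤ) : ℝ) ≤ (n : ℝ) * ((n:ℝ) * ((n:ℝ) - 1)^(n-1)) := hfin
      _ = (n : ℝ) * (n : ℝ) * ((n : ℝ) - 1) ^ (n - 1) := by ring
  · -- S j₀ = 0
    show |((S j₀ : ℤ) : ℝ)| ≤ (n : ℝ) * (n : ℝ) * ((n : ℝ) - 1) ^ (n - 1)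
    rw [hS0]
    simp only [Int.cast_zero, abs_zero]
    have h5 : (0:ℝ) ≤ (n:ℝ) - 1 := by
      have : (1:ℕ) ≤ n := hn
      have : (1:ℝ) ≤ (n:ℝ) := by exact_mod_cast this
      linarith
    positivity
end

section
/- For every integer k and odd L there exists a directed layered graph which is a local optimum of path local search with parameter L (no directed path of length at most L from u to v with disc(v) > disc(u) + 2), has maximum discrepancy exactly k, and has O(k³L²) vertices. -/
open Finset

/-- Local optimality for path local search with parameter `L`: no directed path of
length between `1` and `L` from `u₀` to `u_l` has `disc(u_l) > disc(u₀) + 2`. -/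
def pathLocalOpt {V : Type*} [DecidableEq V] (D : Finset (V × V)) (L : ℕ) : Prop :=
  ∀ l : ℕ, 1 ≤ l → l ≤ L → ∀ p : ℕ → V,
    (∀ j < l, (p j, p (j + 1)) ∈ D) → disc D (p l) ≤ disc D (p 0) + 2

/-!
All layers `0, …, m = (k - 1)L + 1` are copies of `ZMod s`, and the edges from layer `j + 1`
to layer `j` form a `c j`-regular circulant bipartite graph (the paper uses complete bipartite
graphs between layers of varying sizes instead). A vertex of layer `j` then has discrepancy
`c j - c (j - 1)`, so taking for `c j` the partial sums of `b i = k - 2⌈i/L⌉` makes layer `j`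
have discrepancy `b j`; this is the paper's `k - 2(⌊(j - 1)/L⌋ + 1)` for `j ≥ 1`.

A directed path of length `l ≤ L` descends exactly `l` layers, along which `⌈·/L⌉` grows by at
most one, so the discrepancy rises by at most `2`. The counts `c j` are non-negative because `b`
is antitone and antisymmetric (`b (m - j) = -b j`): its partial sums are those of a concave
sequence starting and ending at `0`. They are at most `m k`, so `s = m k` suffices and the
graph has `(m + 1) m k = O(k³L²)` vertices.
-/

lemma mul_ceilDiv_lt_add {L : ℕ} (hL : 0 < L) (j : ℕ) : L * (j ⌈/⌉ L) < j + L := by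
  by_contra! h
  have hpos : 0 < j ⌈/⌉ L := Nat.pos_of_ne_zero fun h0 => by rw [h0] at h; omega
  have : j ⌈/⌉ L ≤ j ⌈/⌉ L - 1 := (ceilDiv_le_iff_le_mul hL).2 (by rw [Nat.mul_sub_one]; omega)
  omega

lemma sum_range_nonneg_of_antitone {α : Type*} [AddCommGroup α] [LinearOrder α]
    [IsOrderedAddMonoid α] {b : ℕ → α} (hb : Antitone b) {j n : ℕ} (hjn : j ≤ n)
    (hsum : 0 ≤ ∑ i ∈ range n, b i) : 0 ≤ ∑ i ∈ range j, b i := by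
  rcases le_or_gt 0 (b j) with hbj | hbj
  · exact sum_nonneg fun i hi => hbj.trans (hb (mem_range.1 hi).le)
  · have htail : ∑ i ∈ Ico j n, b i ≤ 0 :=
      sum_nonpos fun i hi => (hb (mem_Ico.1 hi).1).trans hbj.le
    rw [← sum_range_add_sum_Ico _ hjn] at hsum
    exact le_of_le_add_of_nonpos_left hsum htail

def layerDisc (k L j : ℕ) : ℤ := k - 2 * (j ⌈/⌉ L : ℕ)

section LayerDisc

variable {k L : ℕ}

lemma layerDisc_zero : layerDisc k L 0 = k := by simp [layerDisc]

lemma layerDisc_le (j : ℕ) : layerDisc k L j ≤ k := by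
  simp only [layerDisc]; omega

lemma sum_range_layerDisc_le (n : ℕ) : ∑ i ∈ range n, layerDisc k L i ≤ n * k := by
  simpa using sum_le_card_nsmul (range n) (layerDisc k L) k fun i _ => layerDisc_le i

lemma layerDisc_antitone : Antitone (layerDisc k L) := fun i j hij => by
  have : i ⌈/⌉ L ≤ j ⌈/⌉ L := Nat.div_le_div_right (by omega)
  simp only [layerDisc]; omega

lemma layerDisc_le_add_two (hL : 0 < L) (i : ℕ) {l : ℕ} (hl : l ≤ L) :
    layerDisc k L i ≤ layerDisc k L (i + l) + 2 := by
  have hi := le_smul_ceilDiv hL (b := i)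
  have : (i + l) ⌈/⌉ L ≤ i ⌈/⌉ L + 1 :=
    (ceilDiv_le_iff_le_mul hL).2 (by rw [smul_eq_mul] at hi; rw [mul_add_one]; omega)
  simp only [layerDisc]; omega

lemma abs_layerDisc_le (hL : 0 < L) {j : ℕ} (hj : j ≤ k * L) : |layerDisc k L j| ≤ k := by
  have : j ⌈/⌉ L ≤ k := (ceilDiv_le_iff_le_mul hL).2 (by rwa [mul_comm])
  rw [abs_le]; simp only [layerDisc]; omega

lemma ceilDiv_add_ceilDiv_reflect (hL : 0 < L) (hk : 0 < k) {j : ℕ} (hj : j ≤ (k - 1) * L + 1) :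
    j ⌈/⌉ L + ((k - 1) * L + 1 - j) ⌈/⌉ L = k := by
  obtain ⟨M, hM⟩ : ∃ M, (k - 1) * L = M := ⟨_, rfl⟩
  rw [hM] at hj ⊢
  have hkL : M = L * k - L := by rw [← hM, mul_comm, Nat.mul_sub_one]
  have hLk : L ≤ L * k := Nat.le_mul_of_pos_right L hk
  generalize hc : j ⌈/⌉ L = c
  generalize hd : (M + 1 - j) ⌈/⌉ L = d
  have hjc : j ≤ L * c := hc ▸ le_smul_ceilDiv hL
  have hjc' : L * c < j + L := hc ▸ mul_ceilDiv_lt_add hL j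
  have hjd : M + 1 - j ≤ L * d := hd ▸ le_smul_ceilDiv hL
  have hck : c ≤ k := hc ▸ (ceilDiv_le_iff_le_mul hL).2 (by omega)
  have hdc : d ≤ k - c := hd ▸ (ceilDiv_le_iff_le_mul hL).2 (by rw [Nat.mul_sub]; omega)
  have hcd : k - 1 < c + d :=
    Nat.lt_of_mul_lt_mul_left (a := L) (by rw [mul_add, Nat.mul_sub_one]; omega)
  omega

lemma layerDisc_reflect (hL : 0 < L) (hk : 0 < k) {j : ℕ} (hj : j ≤ (k - 1) * L + 1) :
    layerDisc k L ((k - 1) * L + 1 - j) = -layerDisc k L j := by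
  have := ceilDiv_add_ceilDiv_reflect hL hk hj
  simp only [layerDisc]; omega

lemma sum_range_layerDisc_eq_zero (hL : 0 < L) (hk : 0 < k) :
    ∑ j ∈ range ((k - 1) * L + 2), layerDisc k L j = 0 := by
  have h := sum_range_reflect (layerDisc k L) ((k - 1) * L + 2)
  rw [sum_congr rfl fun j hj => by
    rw [show (k - 1) * L + 2 - 1 - j = (k - 1) * L + 1 - j by omega,
      layerDisc_reflect hL hk (by have := mem_range.1 hj; omega)], sum_neg_distrib] at h
  linarith

end LayerDisc

lemma layer_add_length_of_path {V : Type*} {D : Finset (V × V)} {f : V → ℕ}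
    (hD : ∀ e ∈ D, f e.1 = f e.2 + 1) {p : ℕ → V} {l : ℕ}
    (hp : ∀ j < l, (p j, p (j + 1)) ∈ D) : f (p l) + l = f (p 0) := by
  induction l with
  | zero => rfl
  | succ l ih =>
    have hstep : f (p l) = f (p (l + 1)) + 1 := hD _ (hp l l.lt_succ_self)
    have := ih fun j hj => hp j (hj.trans l.lt_succ_self)
    omega

section Digraph

variable {V W : Type*} [DecidableEq V] [DecidableEq W]

lemma inDeg_eq_card_filter [Fintype V] (D : Finset (V × V)) (v : V) :
    inDeg D v = #{u | (u, v) ∈ D} :=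
  card_nbij' Prod.fst (fun u => (u, v)) (fun e he => by aesop) (fun u hu => by simpa using hu)
    (fun e he => by aesop) (fun u _ => rfl)

lemma outDeg_eq_card_filter [Fintype V] (D : Finset (V × V)) (v : V) :
    outDeg D v = #{w | (v, w) ∈ D} :=
  card_nbij' Prod.snd (fun w => (v, w)) (fun e he => by aesop) (fun w hw => by simpa using hw)
    (fun e he => by aesop) (fun w _ => rfl)

lemma disc_map_equiv (e : V ≃ W) (D : Finset (V × V)) (v : V) :
    disc (D.map (e.prodCongr e).toEmbedding) (e v) = disc D v := by
  simp only [disc, inDeg, outDeg, filter_map, card_map]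
  congr 4 <;> ext x <;> simp [e.injective.eq_iff]

lemma pathLocalOpt.map_equiv {D : Finset (V × V)} {L : ℕ} (h : pathLocalOpt D L) (e : V ≃ W) :
    pathLocalOpt (D.map (e.prodCongr e).toEmbedding) L := by
  intro l hl hlL p hp
  have := h l hl hlL (e.symm ∘ p) fun j hj => by simpa [mem_map_equiv] using hp j hj
  simpa [← disc_map_equiv e D] using this

lemma pathLocalOpt_of_layers {D : Finset (V × V)} {L : ℕ} (f : V → ℕ) (b : ℕ → ℤ)
    (hD : ∀ e ∈ D, f e.1 = f e.2 + 1) (hdisc : ∀ v, disc D v = b (f v))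
    (hb : ∀ i l, l ≤ L → b i ≤ b (i + l) + 2) : pathLocalOpt D L := by
  intro l _ hlL p hp
  rw [hdisc, hdisc, ← layer_add_length_of_path hD hp]
  exact hb _ l hlL

end Digraph

lemma card_filter_equiv_mem {α β : Type*} [Fintype α] [DecidableEq β] (e : α ≃ β)
    (S : Finset β) :
    #{x | e x ∈ S} = #S := by
  rw [← card_map e.symm.toEmbedding]
  congr 1
  ext x
  simp [mem_map_equiv]

lemma card_filter_fin_val_eq (m c : ℕ) :
    #{i : Fin (m + 1) | (i : ℕ) = c} = if c ≤ m then 1 else 0 := by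
  split_ifs with hc
  · exact card_eq_one.2 ⟨⟨c, by omega⟩, by ext i; simp [Fin.ext_iff]⟩
  · exact card_eq_zero.2 (filter_eq_empty_iff.2 fun i _ => by omega)

section LayeredGraph

variable {G : Type*} [AddGroup G] [Fintype G] [DecidableEq G]

def layeredGraph (m : ℕ) (S : ℕ → Finset G) :
    Finset ((Fin (m + 1) × G) × (Fin (m + 1) × G)) :=
  {e | (e.1.1 : ℕ) = e.2.1 + 1 ∧ e.2.2 - e.1.2 ∈ S e.2.1}

variable {m : ℕ} {S : ℕ → Finset G}

lemma layer_eq_of_mem_layeredGraph {e} (he : e ∈ layeredGraph m S) :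
    (e.1.1 : ℕ) = e.2.1 + 1 :=
  (mem_filter.1 he).2.1

lemma inDeg_layeredGraph (v : Fin (m + 1) × G) :
    inDeg (layeredGraph m S) v = if (v.1 : ℕ) < m then #(S v.1) else 0 := by
  rw [inDeg_eq_card_filter]
  simp only [layeredGraph, mem_filter, mem_univ, true_and]
  rw [← univ_product_univ, filter_product (fun i : Fin (m + 1) => (i : ℕ) = v.1 + 1)
    (fun x => v.2 - x ∈ S v.1), card_product, card_filter_fin_val_eq,
    show #{x | v.2 - x ∈ S v.1} = #(S v.1) from
      card_filter_equiv_mem (Equiv.subLeft v.2) (S v.1)]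
  split_ifs <;> omega

lemma outDeg_layeredGraph (v : Fin (m + 1) × G) :
    outDeg (layeredGraph m S) v = if (v.1 : ℕ) = 0 then 0 else #(S (v.1 - 1)) := by
  rw [outDeg_eq_card_filter]
  simp only [layeredGraph, mem_filter, mem_univ, true_and]
  split_ifs with hv
  · exact card_eq_zero.2 (filter_eq_empty_iff.2 fun w _ h => by omega)
  · rw [filter_congr (q := fun w => (w.1 : ℕ) = v.1 - 1 ∧ w.2 - v.2 ∈ S (v.1 - 1))
      fun w _ => by constructor <;> rintro ⟨h1, h2⟩ <;> refine ⟨by omega, ?_⟩ <;>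
        simpa [show (w.1 : ℕ) = v.1 - 1 by omega] using h2,
      ← univ_product_univ, filter_product (fun i : Fin (m + 1) => (i : ℕ) = v.1 - 1)
      (fun x => x - v.2 ∈ S (v.1 - 1)), card_product, card_filter_fin_val_eq,
      show #{x | x - v.2 ∈ S (v.1 - 1)} = #(S (v.1 - 1)) from
        card_filter_equiv_mem (Equiv.subRight v.2) _]
    simp [show (v.1 : ℕ) - 1 ≤ m by omega]

theorem exists_layered_of_partial_sums (b : ℕ → ℤ) (m : ℕ)
    (hpos : ∀ j < m, 0 ≤ ∑ i ∈ range (j + 1), b i)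
    (hle : ∀ j < m, ∑ i ∈ range (j + 1), b i ≤ Fintype.card G)
    (hsum : ∑ i ∈ range (m + 1), b i = 0) :
    ∃ D : Finset ((Fin (m + 1) × G) × (Fin (m + 1) × G)),
      (∀ e ∈ D, (e.1.1 : ℕ) = e.2.1 + 1) ∧ ∀ v, disc D v = b v.1 := by
  have hS : ∀ j, ∃ S : Finset G, j < m → (#S : ℤ) = ∑ i ∈ range (j + 1), b i := fun j => by
    by_cases hj : j < m
    · obtain ⟨S, -, hS⟩ := exists_subset_card_eq (s := (univ : Finset G))
        (n := (∑ i ∈ range (j + 1), b i).toNat) (by rw [card_univ]; have := hle j hj; omega)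
      exact ⟨S, fun _ => by rw [hS, Int.toNat_of_nonneg (hpos j hj)]⟩
    · exact ⟨∅, fun h => absurd h hj⟩
  choose S hS using hS
  refine ⟨layeredGraph m S, fun e => layer_eq_of_mem_layeredGraph, fun v => ?_⟩
  have hin : (inDeg (layeredGraph m S) v : ℤ) = ∑ i ∈ range (v.1 + 1), b i := by
    rw [inDeg_layeredGraph]
    split_ifs with hv
    · exact hS _ hv
    · rw [show (v.1 : ℕ) = m by omega, hsum, Nat.cast_zero]
  have hout : (outDeg (layeredGraph m S) v : ℤ) = ∑ i ∈ range v.1, b i := by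
    rw [outDeg_layeredGraph]
    split_ifs with hv
    · simp [hv]
    · rw [hS _ (by omega), Nat.sub_add_cancel (by omega)]
  rw [disc, hin, hout, sum_range_succ, add_sub_cancel_left]

end LayeredGraph

/-- **Tightness of the path-local-search discrepancy bound.** For every `k` and odd `L`
there is a directed graph that is a local optimum of path local search with parameter
`L`, has maximum discrepancy exactly `k`, and has `O(k³L²)` vertices. -/
theorem stmt11 :
    ∃ C : ℕ, 0 < C ∧
      ∀ k L : ℕ, Odd L →
        ∃ (N : ℕ) (D : Finset (Fin N × Fin N)),
          pathLocalOpt D L ∧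
          (∃ v : Fin N, disc D v = (k : ℤ)) ∧
          (∀ v : Fin N, |disc D v| ≤ (k : ℤ)) ∧
          N ≤ C * (k ^ 3 * L ^ 2 + 1) := by
  refine ⟨2, two_pos, fun k L hLodd => ?_⟩
  have hL : 0 < L := hLodd.pos
  obtain rfl | hk := Nat.eq_zero_or_pos k
  · refine ⟨1, ∅, fun l hl _ p hp => absurd (hp 0 hl) (notMem_empty _),
      ⟨0, by simp [disc, inDeg, outDeg]⟩, fun v => by simp [disc, inDeg, outDeg], by norm_num⟩
  set m := (k - 1) * L + 1
  have hmkL : m ≤ k * L := by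
    have := Nat.sub_one_mul k L
    have := Nat.le_mul_of_pos_left L hk
    omega
  have : NeZero (m * k) := ⟨by positivity⟩
  obtain ⟨D, hD, hdisc⟩ := exists_layered_of_partial_sums (G := ZMod (m * k)) (layerDisc k L) m
    (fun j hj => sum_range_nonneg_of_antitone layerDisc_antitone (by omega : j + 1 ≤ m + 1)
      (sum_range_layerDisc_eq_zero hL hk).ge)
    (fun j hj => (sum_range_layerDisc_le (j + 1)).trans <| by
      rw [ZMod.card]; push_cast; gcongr; omega)
    (sum_range_layerDisc_eq_zero hL hk)
  let e := Fintype.equivFin (Fin (m + 1) × ZMod (m * k))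
  have hdisc' (w) : disc (D.map (e.prodCongr e).toEmbedding) w = layerDisc k L (e.symm w).1 := by
    rw [← e.apply_symm_apply w, disc_map_equiv, hdisc, e.symm_apply_apply]
  refine ⟨_, D.map (e.prodCongr e).toEmbedding,
    (pathLocalOpt_of_layers (fun v => v.1) _ hD hdisc
      fun i _ hl => layerDisc_le_add_two hL i hl).map_equiv e,
    ⟨e (0, 0), by rw [hdisc', e.symm_apply_apply]; exact layerDisc_zero⟩,
    fun w => by rw [hdisc']; exact abs_layerDisc_le hL (by omega), ?_⟩
  rw [Fintype.card_prod, Fintype.card_fin, ZMod.card]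
  calc (m + 1) * (m * k) ≤ (k * L + 1) * (k * L * k) := by gcongr
    _ = k ^ 3 * L ^ 2 + k ^ 2 * L := by ring
    _ ≤ 2 * (k ^ 3 * L ^ 2 + 1) := by
      have : k ^ 2 * L ≤ k ^ 3 * L ^ 2 :=
        Nat.mul_le_mul (Nat.pow_le_pow_right hk (by norm_num)) (Nat.le_self_pow two_ne_zero L)
      omega
end

section
/- Let F be an orientation of a forest on n vertices that is a local optimum of path local search with parameter L = log₂ n (no directed path of length at most log₂ n from u to v with disc(v) > disc(u) + 2). Then every vertex has |disc(v)| ≤ 3. -/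
open Finset

section Aux

variable {V : Type*} [DecidableEq V]

/-- `p` is a directed walk of length `l` in `D`. -/
def IsDW (D : Finset (V × V)) (l : ℕ) (p : ℕ → V) : Prop :=
  ∀ j < l, (p j, p (j + 1)) ∈ D

def mkWalk (D : Finset (V × V)) (G : SimpleGraph V)
    (hG : ∀ u w : V, (u, w) ∈ D → G.Adj u w) :
    (l : ℕ) → (p : ℕ → V) → IsDW D l p → G.Walk (p 0) (p l)
  | 0, _, _ => SimpleGraph.Walk.nil
  | (l+1), p, h =>
      SimpleGraph.Walk.cons (hG _ _ (h 0 (Nat.succ_pos l)))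
        (mkWalk D G hG l (fun i => p (i + 1)) (fun j hj => h (j + 1) (by omega)))

lemma mkWalk_support (D : Finset (V × V)) (G : SimpleGraph V)
    (hG : ∀ u w : V, (u, w) ∈ D → G.Adj u w) :
    ∀ (l : ℕ) (p : ℕ → V) (h : IsDW D l p),
      (mkWalk D G hG l p h).support = (List.range (l + 1)).map p
  | 0, p, h => by simp [mkWalk, List.range_succ]
  | (l+1), p, h => by
      rw [show l + 1 + 1 = (l + 1) + 1 from rfl, List.range_succ_eq_map]
      simp only [mkWalk, SimpleGraph.Walk.support_cons,
        mkWalk_support D G hG l (fun i => p (i + 1)), List.map_cons, List.map_map]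
      congr 1
      exact mkWalk_support D G hG l (fun i => p (i + 1)) _

lemma mkWalk_length (D : Finset (V × V)) (G : SimpleGraph V)
    (hG : ∀ u w : V, (u, w) ∈ D → G.Adj u w) :
    ∀ (l : ℕ) (p : ℕ → V) (h : IsDW D l p), (mkWalk D G hG l p h).length = l
  | 0, p, h => rfl
  | (l+1), p, h => by
      simp [mkWalk, mkWalk_length D G hG l (fun i => p (i + 1))]
      exact mkWalk_length D G hG l (fun i => p (i + 1)) _

/-- No closed directed walks in an orientation of a forest. -/
lemma no_closed (D : Finset (V × V))
    (hirr : ∀ e ∈ D, e.1 ≠ e.2)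
    (hanti : ∀ u w : V, (u, w) ∈ D → (w, u) ∉ D)
    (G : SimpleGraph V)
    (hGa : ∀ u w : V, (u, w) ∈ D → G.Adj u w)
    (hac : G.IsAcyclic) :
    ∀ l, 0 < l → ∀ p, IsDW D l p → p 0 ≠ p l := by
  intro l
  induction l using Nat.strong_induction_on with
  | _ l IH =>
  intro hl p hp heq
  have shift : ∀ i j, i < j → j ≤ l → (i ≠ 0 ∨ j ≠ l) → p i ≠ p j := by
    intro i j hij hjl hne he
    rcases Nat.lt_or_ge j l with hjl' | hjl'
    · exact IH (j - i) (by omega) (by omega) (fun m => p (m + i))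
        (fun m hm => by
          have := hp (m + i) (by omega)
          simpa [Nat.add_right_comm] using this)
        (by simpa [Nat.sub_add_cancel (le_of_lt hij)] using he)
    · have hj : j = l := le_antisymm hjl hjl'
      subst hj
      have hi : i ≠ 0 := by tauto
      exact IH i (by omega) (by omega) p (fun m hm => hp m (by omega)) (heq.trans he.symm)
  match l, hl, hp, heq, shift with
  | 1, _, hp, heq, _ => exact hirr _ (hp 0 (by omega)) heq
  | 2, _, hp, heq, _ =>
      exact hanti (p 0) (p 1) (hp 0 (by omega)) (by
        have h12 := hp 1 (by omega)
        rwa [show p (1 + 1) = p 0 from heq.symm] at h12)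
  | (l'+3), _, hp, heq, shift =>
      set l := l' + 3 with hldef
      have hne01 : p 0 ≠ p 1 := shift 0 1 (by omega) (by omega) (Or.inr (by omega))
      set k := l' + 2 with hkdef
      have hq : IsDW D k (fun i => p (i + 1)) := fun j hj => hp (j + 1) (by omega)
      have hcast : (fun i => p (i + 1)) k = p 0 := by
        show p (k + 1) = p 0
        exact heq.symm
      let w2 : G.Walk (p 1) (p 0) :=
        (mkWalk D G hGa k (fun i => p (i + 1)) hq).copy rfl hcast
      let w1 : G.Walk (p 1) (p 0) :=
        SimpleGraph.Walk.cons ((hGa _ _ (hp 0 (by omega))).symm) SimpleGraph.Walk.nil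
      have hp1 : w1.IsPath := by
        simp [w1, SimpleGraph.Walk.isPath_def, hne01.symm]
      have hp2 : w2.IsPath := by
        rw [SimpleGraph.Walk.isPath_def]
        show ((mkWalk D G hGa k (fun i => p (i + 1)) hq).copy rfl hcast).support.Nodup
        rw [SimpleGraph.Walk.support_copy, mkWalk_support]
        apply List.Nodup.map_on _ List.nodup_range
        intro a ha b hb he
        simp only [List.mem_range] at ha hb
        by_contra hab
        rcases Nat.lt_or_ge a b with h' | h'
        · exact shift (a + 1) (b + 1) (by omega) (by omega) (Or.inl (by omega)) he
        · exact shift (b + 1) (a + 1) (by omega) (by omega) (Or.inl (by omega)) he.symm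
      have hpu := SimpleGraph.isAcyclic_iff_path_unique.mp hac
      have heqP : (⟨w1, hp1⟩ : G.Path (p 1) (p 0)) = ⟨w2, hp2⟩ := hpu _ _
      have hlen : w1.length = w2.length :=
        congrArg SimpleGraph.Walk.length (Subtype.ext_iff.mp heqP)
      have h1 : w1.length = 1 := rfl
      have h2 : w2.length = k := by
        show ((mkWalk D G hGa k (fun i => p (i + 1)) hq).copy rfl hcast).length = k
        rw [SimpleGraph.Walk.length_copy, mkWalk_length]
      omega

/-- Directed walks in an orientation of a forest are simple (no repeated vertices). -/
lemma dw_inj (D : Finset (V × V))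
    (hirr : ∀ e ∈ D, e.1 ≠ e.2)
    (hanti : ∀ u w : V, (u, w) ∈ D → (w, u) ∉ D)
    (G : SimpleGraph V)
    (hGa : ∀ u w : V, (u, w) ∈ D → G.Adj u w)
    (hac : G.IsAcyclic)
    (k : ℕ) (p : ℕ → V) (hp : IsDW D k p) :
    ∀ i j, i ≤ k → j ≤ k → p i = p j → i = j := by
  intro i j hi hj he
  by_contra hij
  rcases Nat.lt_or_ge i j with h' | h'
  · exact no_closed D hirr hanti G hGa hac (j - i) (by omega) (fun m => p (m + i))
      (fun m hm => by simpa [Nat.add_right_comm] using hp (m + i) (by omega))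
      (by simpa [Nat.sub_add_cancel (le_of_lt h')] using he)
  · exact no_closed D hirr hanti G hGa hac (i - j) (by omega) (fun m => p (m + j))
      (fun m hm => by simpa [Nat.add_right_comm] using hp (m + j) (by omega))
      (by simpa [Nat.sub_add_cancel h'] using he.symm)

/-- Two directed walks of the same length with the same endpoints coincide. -/
lemma walk_eq (D : Finset (V × V))
    (hirr : ∀ e ∈ D, e.1 ≠ e.2)
    (hanti : ∀ u w : V, (u, w) ∈ D → (w, u) ∉ D)
    (G : SimpleGraph V)
    (hGa : ∀ u w : V, (u, w) ∈ D → G.Adj u w)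
    (hac : G.IsAcyclic)
    (k : ℕ) (p q : ℕ → V) (hp : IsDW D k p) (hq : IsDW D k q)
    (h0 : p 0 = q 0) (hk : p k = q k) : ∀ i ≤ k, p i = q i := by
  have nodup : ∀ (r : ℕ → V), IsDW D k r → ((List.range (k + 1)).map r).Nodup := by
    intro r hr
    apply List.Nodup.map_on _ List.nodup_range
    intro a ha b hb he
    simp only [List.mem_range] at ha hb
    exact dw_inj D hirr hanti G hGa hac k r hr a b (by omega) (by omega) he
  have hpP : (mkWalk D G hGa k p hp).IsPath := by
    rw [SimpleGraph.Walk.isPath_def, mkWalk_support]; exact nodup p hp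
  have hqP : ((mkWalk D G hGa k q hq).copy h0.symm hk.symm).IsPath := by
    rw [SimpleGraph.Walk.isPath_def, SimpleGraph.Walk.support_copy, mkWalk_support]
    exact nodup q hq
  have hpu := SimpleGraph.isAcyclic_iff_path_unique.mp hac
  have heqP : (⟨mkWalk D G hGa k p hp, hpP⟩ : G.Path (p 0) (p k))
      = ⟨(mkWalk D G hGa k q hq).copy h0.symm hk.symm, hqP⟩ := hpu _ _
  have hw : mkWalk D G hGa k p hp = (mkWalk D G hGa k q hq).copy h0.symm hk.symm := by
    rw [Subtype.ext_iff] at heqP; exact heqP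
  have hsupp : (List.range (k + 1)).map p = (List.range (k + 1)).map q := by
    have := congrArg SimpleGraph.Walk.support hw
    rwa [mkWalk_support, SimpleGraph.Walk.support_copy, mkWalk_support] at this
  intro i hi
  have h1 := congrArg (fun L => L[i]?) hsupp
  simp only [List.getElem?_map, List.getElem?_range (show i < k + 1 by omega),
    Option.map_some] at h1
  exact Option.some.inj h1

/-- Level sets: vertices admitting a directed walk of length `k` to `v`. -/
def levels (D : Finset (V × V)) (v : V) : ℕ → Finset V
  | 0 => {v}
  | (k+1) => (D.filter (fun e => e.2 ∈ levels D v k)).image Prod.fst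

lemma mem_levels (D : Finset (V × V)) (v : V) :
    ∀ (k : ℕ) (u : V), u ∈ levels D v k ↔ ∃ p, p 0 = u ∧ p k = v ∧ IsDW D k p := by
  intro k
  induction k with
  | zero =>
      intro u
      simp only [levels, Finset.mem_singleton]
      constructor
      · rintro rfl
        exact ⟨fun _ => u, rfl, rfl, fun j hj => absurd hj (by omega)⟩
      · rintro ⟨p, h0, hk, -⟩
        rw [← h0, hk]
  | succ k ih =>
      intro u
      simp only [levels, Finset.mem_image, Finset.mem_filter]
      constructor
      · rintro ⟨e, ⟨heD, hw⟩, rfl⟩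
        obtain ⟨pw, hw0, hwk, hww⟩ := (ih e.2).mp hw
        refine ⟨fun i => Nat.casesOn i e.1 pw, rfl, hwk, ?_⟩
        intro j hj
        cases j with
        | zero =>
            show (e.1, pw 0) ∈ D
            rw [hw0]
            exact heD
        | succ j => exact hww j (by omega)
      · rintro ⟨p, h0, hk, hw⟩
        refine ⟨(p 0, p 1), ⟨hw 0 (by omega), ?_⟩, h0⟩
        exact (ih (p 1)).mpr ⟨fun i => p (i + 1), rfl, hk, fun j hj => hw (j + 1) (by omega)⟩

lemma card_inNbrs (D : Finset (V × V)) (u : V) :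
    ((D.filter (fun e => e.2 = u)).image Prod.fst).card = inDeg D u := by
  rw [inDeg]
  apply Finset.card_image_of_injOn
  intro e he f hf h
  simp only [Finset.coe_filter, Set.mem_setOf_eq] at he hf
  exact Prod.ext h (he.2.trans hf.2.symm)

/-- Key lemma: discrepancy is at most 3 at every vertex. -/
lemma key {V : Type*} [Fintype V] [DecidableEq V] (D : Finset (V × V))
    (hirr : ∀ e ∈ D, e.1 ≠ e.2)
    (hanti : ∀ u w : V, (u, w) ∈ D → (w, u) ∉ D)
    (hforest : ∀ G : SimpleGraph V,
      (∀ u w : V, G.Adj u w ↔ ((u, w) ∈ D ∨ (w, u) ∈ D)) → G.IsAcyclic)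
    (hopt : pathLocalOpt D (Nat.log 2 (Fintype.card V))) :
    ∀ v : V, disc D v ≤ 3 := by
  intro v
  by_contra hcon
  push_neg at hcon
  have hv4 : 4 ≤ disc D v := by omega
  set n := Fintype.card V with hn
  set L := Nat.log 2 n with hLdef
  set G : SimpleGraph V := SimpleGraph.fromRel (fun u w => (u, w) ∈ D) with hGdef
  have hGiff : ∀ u w : V, G.Adj u w ↔ ((u, w) ∈ D ∨ (w, u) ∈ D) := by
    intro u w
    rw [hGdef, SimpleGraph.fromRel_adj]
    constructor
    · rintro ⟨-, h⟩; exact h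
    · intro h
      refine ⟨?_, h⟩
      rcases h with h | h
      · exact hirr _ h
      · exact (hirr _ h).symm
  have hGa : ∀ u w : V, (u, w) ∈ D → G.Adj u w := fun u w h => (hGiff u w).2 (Or.inl h)
  have hac : G.IsAcyclic := hforest G hGiff
  have hin4 : 4 ≤ inDeg D v := by
    have : (inDeg D v : ℤ) - (outDeg D v : ℤ) = disc D v := rfl
    omega
  have hn2 : 2 ≤ n := by
    have hpos : 0 < (D.filter (fun e => e.2 = v)).card := by
      rw [← inDeg]; omega
    obtain ⟨e, he⟩ := Finset.card_pos.mp hpos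
    simp only [Finset.mem_filter] at he
    have : e.1 ≠ v := by rw [← he.2]; exact hirr _ he.1
    rw [hn]
    exact Fintype.one_lt_card_iff.mpr ⟨e.1, v, this⟩
  have hL1 : 1 ≤ L := Nat.log_pos (by norm_num) hn2
  set A := levels D v with hAdef
  have hdisc : ∀ k, 1 ≤ k → k ≤ L → ∀ u ∈ A k, 2 ≤ disc D u := by
    intro k h1 h2 u hu
    obtain ⟨p, h0, hk, hw⟩ := (mem_levels D v k u).mp hu
    have := hopt k h1 h2 p hw
    rw [h0, hk] at this
    omega
  have hgrow : ∀ k, 1 ≤ k → k ≤ L → 2 ^ (k + 1) ≤ (A k).card := by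
    intro k
    induction k with
    | zero => omega
    | succ k ih =>
      intro _ hkL
      rcases Nat.eq_zero_or_pos k with rfl | hk1
      · show 2 ^ 2 ≤ (A 1).card
        have hA1 : A 1 = (D.filter (fun e => e.2 = v)).image Prod.fst := by
          rw [hAdef]
          show (D.filter (fun e => e.2 ∈ levels D v 0)).image Prod.fst = _
          congr 1
          apply Finset.filter_congr
          intro e _
          simp [levels]
        rw [hA1, card_inNbrs]
        omega
      · have hA : A (k + 1)
            = (A k).biUnion (fun u => (D.filter (fun e => e.2 = u)).image Prod.fst) := by
          ext x
          simp only [hAdef, levels, Finset.mem_image, Finset.mem_filter, Finset.mem_biUnion]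
          constructor
          · rintro ⟨e, ⟨heD, hm⟩, rfl⟩
            exact ⟨e.2, hm, e, ⟨heD, rfl⟩, rfl⟩
          · rintro ⟨u, hu, e, ⟨heD, he2⟩, rfl⟩
            exact ⟨e, ⟨heD, he2 ▸ hu⟩, rfl⟩
        have hdisj : ∀ u ∈ A k, ∀ u' ∈ A k, u ≠ u' →
            Disjoint ((D.filter (fun e => e.2 = u)).image Prod.fst)
              ((D.filter (fun e => e.2 = u')).image Prod.fst) := by
          intro u hu u' hu' hne
          rw [Finset.disjoint_left]
          intro x hx hx'
          simp only [Finset.mem_image, Finset.mem_filter] at hx hx'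
          obtain ⟨e, ⟨heD, he2⟩, he1⟩ := hx
          obtain ⟨f, ⟨hfD, hf2⟩, hf1⟩ := hx'
          have hxu : (x, u) ∈ D := by rw [← he1, ← he2]; exact heD
          have hxu' : (x, u') ∈ D := by rw [← hf1, ← hf2]; exact hfD
          obtain ⟨pu, hpu0, hpuk, hpuw⟩ := (mem_levels D v k u).mp hu
          obtain ⟨qu, hqu0, hquk, hquw⟩ := (mem_levels D v k u').mp hu'
          have hwp : IsDW D (k + 1) (fun i => Nat.casesOn i x pu) := by
            intro j hj
            cases j with
            | zero => show (x, pu 0) ∈ D; rw [hpu0]; exact hxu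
            | succ j => exact hpuw j (by omega)
          have hwq : IsDW D (k + 1) (fun i => Nat.casesOn i x qu) := by
            intro j hj
            cases j with
            | zero => show (x, qu 0) ∈ D; rw [hqu0]; exact hxu'
            | succ j => exact hquw j (by omega)
          have := walk_eq D hirr hanti G hGa hac (k + 1)
            (fun i => Nat.casesOn i x pu) (fun i => Nat.casesOn i x qu)
            hwp hwq rfl (by show pu k = qu k; rw [hpuk, hquk]) 1 (by omega)
          simp only at this
          exact hne (by rw [← hpu0, ← hqu0]; exact this)
        rw [hA, Finset.card_biUnion hdisj]
        have hlb : ∀ u ∈ A k, 2 ≤ ((D.filter (fun e => e.2 = u)).image Prod.fst).card := by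
          intro u hu
          rw [card_inNbrs]
          have h2 := hdisc k hk1 (by omega) u hu
          have : (inDeg D u : ℤ) - (outDeg D u : ℤ) = disc D u := rfl
          omega
        have hsum := Finset.card_nsmul_le_sum (A k)
          (fun u => ((D.filter (fun e => e.2 = u)).image Prod.fst).card) 2 hlb
        have hcard := ih hk1 (by omega)
        have : (A k).card • 2 = 2 * (A k).card := by rw [smul_eq_mul]; ring
        calc 2 ^ (k + 1 + 1) = 2 * 2 ^ (k + 1) := by ring
          _ ≤ 2 * (A k).card := by omega
          _ ≤ _ := by omega
  have hfin : (A L).card ≤ n := by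
    rw [hn]
    exact Finset.card_le_univ _ |>.trans (le_of_eq (Finset.card_univ))
  have hbig := hgrow L hL1 le_rfl
  have hlt : n < 2 ^ (L + 1) := Nat.lt_pow_succ_log_self (by norm_num) n
  omega

end Aux

/-- **Path local search on forests.** If `D` is an orientation of a forest on `n`
vertices that is a local optimum of path local search with parameter `log₂ n`, then
every vertex has discrepancy at most `3` in absolute value. -/
theorem stmt13 (V : Type*) [Fintype V] [DecidableEq V] (D : Finset (V × V))
    (hirr : ∀ e ∈ D, e.1 ≠ e.2)
    (hanti : ∀ u w : V, (u, w) ∈ D → (w, u) ∉ D)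
    (hforest : ∀ G : SimpleGraph V,
      (∀ u w : V, G.Adj u w ↔ ((u, w) ∈ D ∨ (w, u) ∈ D)) → G.IsAcyclic)
    (hopt : pathLocalOpt D (Nat.log 2 (Fintype.card V))) :
    ∀ v : V, |disc D v| ≤ 3 := by
  intro v
  have h1 : disc D v ≤ 3 := key D hirr hanti hforest hopt v
  set E := D.image Prod.swap with hE
  have hmem : ∀ e : V × V, e ∈ E ↔ (e.2, e.1) ∈ D := by
    intro e
    rw [hE]
    simp only [Finset.mem_image]
    constructor
    · rintro ⟨a, ha, rfl⟩
      simpa using ha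
    · intro h
      exact ⟨(e.2, e.1), h, rfl⟩
  have hirr' : ∀ e ∈ E, e.1 ≠ e.2 := by
    intro e he
    exact (hirr _ ((hmem e).1 he)).symm
  have hanti' : ∀ u w : V, (u, w) ∈ E → (w, u) ∉ E := by
    intro u w hu hw
    exact hanti w u ((hmem _).1 hu) ((hmem _).1 hw)
  have hforest' : ∀ G : SimpleGraph V,
      (∀ u w : V, G.Adj u w ↔ ((u, w) ∈ E ∨ (w, u) ∈ E)) → G.IsAcyclic := by
    intro G hG
    apply hforest G
    intro u w
    rw [hG u w, hmem, hmem]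
    exact or_comm
  have hinE : ∀ x, inDeg E x = outDeg D x := by
    intro x
    rw [inDeg, outDeg]
    have : E.filter (fun e => e.2 = x) = (D.filter (fun e => e.1 = x)).image Prod.swap := by
      ext e
      simp only [Finset.mem_filter, Finset.mem_image, hmem]
      constructor
      · rintro ⟨h1', h2⟩
        exact ⟨(e.2, e.1), ⟨h1', h2⟩, rfl⟩
      · rintro ⟨a, ⟨ha, ha1⟩, rfl⟩
        exact ⟨by simpa using ha, ha1⟩
    rw [this, Finset.card_image_of_injective _ Prod.swap_injective]
  have houtE : ∀ x, outDeg E x = inDeg D x := by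
    intro x
    rw [inDeg, outDeg]
    have : E.filter (fun e => e.1 = x) = (D.filter (fun e => e.2 = x)).image Prod.swap := by
      ext e
      simp only [Finset.mem_filter, Finset.mem_image, hmem]
      constructor
      · rintro ⟨h1', h2⟩
        exact ⟨(e.2, e.1), ⟨h1', h2⟩, rfl⟩
      · rintro ⟨a, ⟨ha, ha1⟩, rfl⟩
        exact ⟨by simpa using ha, ha1⟩
    rw [this, Finset.card_image_of_injective _ Prod.swap_injective]
  have hdiscE : ∀ x, disc E x = - disc D x := by
    intro x
    rw [disc, disc, hinE, houtE]
    ring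
  have hopt' : pathLocalOpt E (Nat.log 2 (Fintype.card V)) := by
    intro l h1' h2' p hp
    have hq : ∀ j < l, ((fun j => p (l - j)) j, (fun j => p (l - j)) (j + 1)) ∈ D := by
      intro j hj
      have h := hp (l - j - 1) (by omega)
      rw [hmem] at h
      simp only []
      have e1 : l - j - 1 + 1 = l - j := by omega
      have e2 : l - (j + 1) = l - j - 1 := by omega
      rw [e2, ← e1]
      exact h
    have := hopt l h1' h2' (fun j => p (l - j)) hq
    simp only [Nat.sub_self, Nat.sub_zero] at this
    rw [hdiscE, hdiscE]
    linarith
  have h2 : disc E v ≤ 3 := key E hirr' hanti' hforest' hopt' v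
  rw [hdiscE] at h2
  rw [abs_le]
  constructor
  · linarith
  · exact h1
end

section
/- Let t = 2^{a_1} + 2^{a_2} + … + 2^{a_s} with a_1 > a_2 > … > a_s ≥ 0 be the binary representation of a positive integer t, and let τ_i = ∑_{j≤i} 2^{a_j}. In the dyadic resigning scheme (re-sign the last 2^ℓ items at time t where 2^ℓ is the largest power of 2 dividing t), the partition of {1,…,t} maintained at time t is exactly the intervals (τ_{i-1}, τ_i] for i = 1,…,s. -/
/-!
Let `τ i` be the partial sums of the binary expansion of `t`. The earlier summands of `τ i` are
divisible by `2^{a (i-1) + 1}`, so `v₂(τ i) = a (i-1)` and time `τ i` merges exactly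
`(τ (i-1), τ i]`. The later summands add up to less than `2^{a (i-1)}`, so every time
`n ∈ (τ i, t]` has `v₂ n < a (i-1)`; as `2^{v₂ n}` then divides `n - τ i`, the block merged at
time `n` starts at or after `τ i` and leaves the items `j ≤ τ i` alone.
-/

open Finset

/-- Left endpoint of the dyadic block ending at `s`: `s - 2^{v₂(s)}`. -/
def blockStart (s : ℕ) : ℕ := s - 2 ^ (padicValNat 2 s)

/-- The last time `≤ t` at which item `j` was (re-)signed in the dyadic resigning
scheme. -/
def lastResign (t j : ℕ) : ℕ :=
  Nat.findGreatest (fun s => j ≤ s ∧ blockStart s < j) t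

lemma padicValNat_add_pow_of_pow_succ_dvd {p b c : ℕ} [hp : Fact p.Prime]
    (hc : p ^ (b + 1) ∣ c) : padicValNat p (c + p ^ b) = b := by
  have hne : c + p ^ b ≠ 0 := (Nat.add_pos_right c (pow_pos hp.out.pos b)).ne'
  refine le_antisymm (not_lt.1 fun h => ?_) ((padicValNat_dvd_iff_le hne).1 ?_)
  · have hdvd : p ^ (b + 1) ∣ p ^ b := (Nat.dvd_add_right hc).1 ((padicValNat_dvd_iff_le hne).2 h)
    exact absurd ((Nat.pow_dvd_pow_iff_le_right hp.out.one_lt).1 hdvd) (by omega)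
  · exact dvd_add ((pow_dvd_pow p b.le_succ).trans hc) dvd_rfl

lemma blockStart_add_two_pow {b c : ℕ} (hc : 2 ^ (b + 1) ∣ c) : blockStart (c + 2 ^ b) = c := by
  rw [blockStart, padicValNat_add_pow_of_pow_succ_dvd hc, Nat.add_sub_cancel]

lemma le_blockStart {b c n : ℕ} (hc : 2 ^ b ∣ c) (hcn : c < n) (hn : n < c + 2 ^ b) :
    c ≤ blockStart n := by
  have hv : 2 ^ padicValNat 2 n ∣ n := pow_padicValNat_dvd
  have hvb : padicValNat 2 n < b := by
    by_contra! h
    have := Nat.le_of_dvd (by omega) (Nat.dvd_sub ((pow_dvd_pow 2 h).trans hv) hc)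
    omega
  have := Nat.le_of_dvd (by omega) (Nat.dvd_sub hv ((pow_dvd_pow 2 hvb.le).trans hc))
  unfold blockStart
  omega

/-- Until time `c + 2^{b+1}`, no block formed after `(c, c + 2^b]` reaches back past `c + 2^b`. -/
lemma lastResign_eq_of_mem_block {b c j t : ℕ} (hc : 2 ^ (b + 1) ∣ c) (hcj : c < j)
    (hj : j ≤ c + 2 ^ b) (ht : c + 2 ^ b ≤ t) (ht' : t < c + 2 ^ b + 2 ^ b) :
    lastResign t j = c + 2 ^ b := by
  rw [lastResign, Nat.findGreatest_eq_iff]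
  refine ⟨ht, fun _ => ⟨hj, (blockStart_add_two_pow hc).symm ▸ hcj⟩, fun n hn hnt ⟨hjn, hbn⟩ => ?_⟩
  have := le_blockStart (dvd_add ((pow_dvd_pow 2 b.le_succ).trans hc) dvd_rfl) hn (by omega)
  omega

lemma exists_lt_le_succ {f : ℕ → ℕ} {j s : ℕ} (h0 : f 0 < j) (hs : j ≤ f s) :
    ∃ k < s, f k < j ∧ j ≤ f (k + 1) := by
  induction s with
  | zero => omega
  | succ s ih =>
    by_cases hj : j ≤ f s
    · obtain ⟨k, hk, hfk⟩ := ih hj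
      exact ⟨k, by omega, hfk⟩
    · exact ⟨s, by omega, by omega, hs⟩

section BinaryExpansion

variable {p s k : ℕ} {a : ℕ → ℕ}

lemma pow_succ_dvd_sum_range_pow (ha : StrictAntiOn a (Set.Iio s)) (hk : k < s) :
    p ^ (a k + 1) ∣ ∑ m ∈ range k, p ^ a m :=
  dvd_sum fun _ hm => pow_dvd_pow p <| ha (mem_range.1 hm |>.trans hk) hk (mem_range.1 hm)

lemma sum_Ico_pow_lt (hp : 2 ≤ p) (ha : StrictAntiOn a (Set.Iio s)) (hk : k < s) :
    ∑ m ∈ Ico (k + 1) s, p ^ a m < p ^ a k := by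
  have hinj : Set.InjOn a (Ico (k + 1) s) :=
    ha.injOn.mono fun _ hm => (mem_Ico.1 hm).2
  rw [← sum_image hinj]
  refine Nat.geomSum_lt hp fun e he => ?_
  obtain ⟨m, hm, rfl⟩ := mem_image.1 he
  exact ha hk (mem_Ico.1 hm).2 (Nat.lt_of_succ_le (mem_Ico.1 hm).1)

lemma sum_range_pow_lt_sum_range_succ_add (hp : 2 ≤ p) (ha : StrictAntiOn a (Set.Iio s))
    (hk : k < s) :
    ∑ m ∈ range s, p ^ a m < ∑ m ∈ range (k + 1), p ^ a m + p ^ a k := by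
  rw [← sum_range_add_sum_Ico _ hk]
  exact Nat.add_lt_add_left (sum_Ico_pow_lt hp ha hk) _

end BinaryExpansion

theorem stmt17_general (t s : ℕ) (a : ℕ → ℕ)
    (hanti : ∀ i j : ℕ, i < j → j < s → a j < a i)
    (hrep : t = ∑ i ∈ Finset.range s, 2 ^ (a i)) :
    ∀ j : ℕ, 1 ≤ j → j ≤ t →
      ∃ i : ℕ, 1 ≤ i ∧ i ≤ s ∧
        (∑ m ∈ Finset.range (i - 1), 2 ^ (a m)) < j ∧
        j ≤ (∑ m ∈ Finset.range i, 2 ^ (a m)) ∧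
        lastResign t j = ∑ m ∈ Finset.range i, 2 ^ (a m) ∧
        blockStart (∑ m ∈ Finset.range i, 2 ^ (a m)) = ∑ m ∈ Finset.range (i - 1), 2 ^ (a m) := by
  intro j hj hjt
  have ha : StrictAntiOn a (Set.Iio s) := fun i _ j hj hij => hanti i j hij hj
  obtain ⟨k, hks, hkj, hjk⟩ :=
    exists_lt_le_succ (f := fun i => ∑ m ∈ range i, 2 ^ a m) (by rwa [sum_range_zero]) (hrep ▸ hjt)
  have hdvd := pow_succ_dvd_sum_range_pow (p := 2) ha hks
  have htk : ∑ m ∈ range (k + 1), 2 ^ a m ≤ t :=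
    hrep ▸ sum_le_sum_of_subset (range_subset_range.2 hks)
  have htk' := hrep ▸ sum_range_pow_lt_sum_range_succ_add le_rfl ha hks
  rw [sum_range_succ] at hjk htk htk'
  refine ⟨k + 1, by omega, hks, ?_⟩
  simp only [Nat.add_sub_cancel, sum_range_succ]
  exact ⟨hkj, hjk, lastResign_eq_of_mem_block hdvd hkj hjk htk htk', blockStart_add_two_pow hdvd⟩

/-- **Block structure of the dyadic resigning scheme.** Write
`t = 2^{a 0} + … + 2^{a (s-1)}` with `a` strictly decreasing, and let
`τ i = ∑_{m < i} 2^{a m}`. Then the partition of `{1,…,t}` maintained by the scheme at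
time `t` is exactly the intervals `(τ (i-1), τ i]` for `i = 1,…,s`: each `j` lies in a
unique such interval, its last resign time is `τ i` and the block of `τ i` starts
at `τ (i-1)`. -/
theorem stmt17 (t s : ℕ) (ht : 1 ≤ t) (a : ℕ → ℕ)
    (hanti : ∀ i j : ℕ, i < j → j < s → a j < a i)
    (hrep : t = ∑ i ∈ Finset.range s, 2 ^ (a i)) :
    ∀ j : ℕ, 1 ≤ j → j ≤ t →
      ∃ i : ℕ, 1 ≤ i ∧ i ≤ s ∧
        (∑ m ∈ Finset.range (i - 1), 2 ^ (a m)) < j ∧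
        j ≤ (∑ m ∈ Finset.range i, 2 ^ (a m)) ∧
        lastResign t j = ∑ m ∈ Finset.range i, 2 ^ (a m) ∧
        blockStart (∑ m ∈ Finset.range i, 2 ^ (a m)) = ∑ m ∈ Finset.range (i - 1), 2 ^ (a m) :=
  stmt17_general t s a hanti hrep
end

section
/- Let G be a directed graph with no parallel edges which is a local optimum of the δ-threshold local search (no directed edge (u,v) with disc(v) > disc(u) + δ). Then the maximum discrepancy k satisfies k = O(n^{1/3} δ^{2/3}), where n is the number of vertices. -/
open Finset

section aux
variable {V : Type} [DecidableEq V]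

lemma sum_inDeg (D : Finset (V × V)) (A : Finset V) :
    ∑ w ∈ A, inDeg D w = (D.filter (fun e => e.2 ∈ A)).card := by
  rw [Finset.card_eq_sum_card_fiberwise (f := Prod.snd) (s := D.filter (fun e => e.2 ∈ A)) (t := A)
    (fun e he => (Finset.mem_filter.mp he).2)]
  refine Finset.sum_congr rfl (fun w hw => ?_)
  rw [inDeg, Finset.filter_filter]
  refine congrArg Finset.card (Finset.filter_congr (fun e _ => ?_))
  exact ⟨fun h => ⟨h ▸ hw, h⟩, fun h => h.2⟩

lemma sum_outDeg (D : Finset (V × V)) (A : Finset V) :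
    ∑ w ∈ A, outDeg D w = (D.filter (fun e => e.1 ∈ A)).card := by
  rw [Finset.card_eq_sum_card_fiberwise (f := Prod.fst) (s := D.filter (fun e => e.1 ∈ A)) (t := A)
    (fun e he => (Finset.mem_filter.mp he).2)]
  refine Finset.sum_congr rfl (fun w hw => ?_)
  rw [outDeg, Finset.filter_filter]
  refine congrArg Finset.card (Finset.filter_congr (fun e _ => ?_))
  exact ⟨fun h => ⟨h ▸ hw, h⟩, fun h => h.2⟩

lemma sum_disc_le (D : Finset (V × V)) (A : Finset V) :
    ∑ w ∈ A, disc D w ≤ ((D.filter (fun e => e.1 ∉ A ∧ e.2 ∈ A)).card : ℤ) := by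
  have hin : (D.filter (fun e => e.2 ∈ A)).card
      = (D.filter (fun e => e.1 ∈ A ∧ e.2 ∈ A)).card
        + (D.filter (fun e => e.1 ∉ A ∧ e.2 ∈ A)).card := by
    have h := Finset.card_filter_add_card_filter_not
      (s := D.filter (fun e => e.2 ∈ A)) (p := fun e => e.1 ∈ A)
    rw [Finset.filter_filter, Finset.filter_filter] at h
    rw [← h]
    congr 1
    · exact congrArg Finset.card (Finset.filter_congr (fun e _ => by tauto))
    · exact congrArg Finset.card (Finset.filter_congr (fun e _ => by tauto))
  have hout : (D.filter (fun e => e.1 ∈ A ∧ e.2 ∈ A)).card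
      ≤ (D.filter (fun e => e.1 ∈ A)).card :=
    Finset.card_le_card (fun e he => Finset.mem_filter.mpr
      ⟨(Finset.mem_filter.mp he).1, (Finset.mem_filter.mp he).2.1⟩)
  have hsum : ∑ w ∈ A, disc D w
      = ((D.filter (fun e => e.2 ∈ A)).card : ℤ) - ((D.filter (fun e => e.1 ∈ A)).card : ℤ) := by
    rw [← sum_inDeg D A, ← sum_outDeg D A]
    simp only [disc]
    push_cast
    exact Finset.sum_sub_distrib _ _
  rw [hsum, hin]
  push_cast
  omega
end aux


lemma growth (s l : ℕ → ℕ) (k m : ℕ)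
    (hs0 : s 0 = 1) (hl0 : l 0 = 1)
    (hstep : ∀ i, s (i + 1) = s i + l (i + 1))
    (hl : ∀ i, l i ≤ s i)
    (hkey : ∀ i, i ≤ m → k * s i ≤ 2 * (l (i + 1) * l i)) :
    ∀ i, i ≤ m + 1 → k * i ^ 2 ≤ 32 * s i := by
  intro i
  induction i using Nat.strong_induction_on with
  | _ i ih =>
    match i with
    | 0 => intro _; simp
    | 1 =>
      intro _
      have hk0 := hkey 0 (Nat.zero_le m)
      have h1 := hstep 0
      rw [hs0, hl0] at hk0
      norm_num at hk0 h1 ⊢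
      omega
    | 2 =>
      intro h2m
      have hk1 := hkey 1 (by omega)
      have hs1 : s 1 = 1 + l 1 := by rw [hstep 0, hs0]
      have hl1 : l 1 ≤ s 1 := hl 1
      have hs2 : s 2 = s 1 + l 2 := hstep 1
      have hs1pos : 1 ≤ s 1 := by omega
      have hkk : k * s 1 ≤ (2 * l 2) * s 1 := by
        calc k * s 1 ≤ 2 * (l 2 * l 1) := hk1
        _ ≤ 2 * (l 2 * s 1) := by
            exact Nat.mul_le_mul_left 2 (Nat.mul_le_mul_left (l 2) hl1)
        _ = (2 * l 2) * s 1 := by ring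
      have hk2 : k ≤ 2 * l 2 := Nat.le_of_mul_le_mul_right hkk hs1pos
      nlinarith
    | (j + 3) =>
      intro him
      have hI : k * (j + 1) ^ 2 ≤ 32 * s (j + 1) := ih (j + 1) (by omega) (by omega)
      have hk2 : k * s (j + 2) ≤ 2 * (l (j + 3) * l (j + 2)) := hkey (j + 2) (by omega)
      have hmono : s (j + 1) ≤ s (j + 2) := by rw [hstep (j + 1)]; omega
      set a := l (j + 2) with ha
      set b := l (j + 3) with hb
      have hab : 4 * (b * a) ≤ (a + b) ^ 2 := by nlinarith [two_mul_le_add_sq a b]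
      have key2 : k * s (j + 1) ≤ 2 * (b * a) :=
        le_trans (Nat.mul_le_mul_left k hmono) hk2
      have sq : (k * (j + 1)) ^ 2 ≤ (4 * (a + b)) ^ 2 := by nlinarith
      have hlin : k * (j + 1) ≤ 4 * (a + b) := by
        by_contra hcon
        push_neg at hcon
        have hlt : (4 * (a + b)) ^ 2 < (k * (j + 1)) ^ 2 :=
          Nat.pow_lt_pow_left hcon (by norm_num)
        omega
      have hs3 : s (j + 3) = s (j + 1) + a + b := by
        rw [hstep (j + 2), hstep (j + 1)]
      nlinarith

def ball {V : Type} [DecidableEq V] (D : Finset (V × V)) (v : V) : ℕ → Finset V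
  | 0 => {v}
  | (i + 1) => ball D v i ∪ (D.filter (fun e => e.2 ∈ ball D v i)).image Prod.fst

def sphere {V : Type} [DecidableEq V] (D : Finset (V × V)) (v : V) : ℕ → Finset V
  | 0 => {v}
  | (i + 1) => ball D v (i + 1) \ ball D v i

section props
variable {V : Type} [DecidableEq V] (D : Finset (V × V)) (v : V)

lemma ball_mono (i : ℕ) : ball D v i ⊆ ball D v (i + 1) := by
  rw [ball]; exact Finset.subset_union_left

lemma sphere_subset (i : ℕ) : sphere D v i ⊆ ball D v i := by
  cases i with
  | zero => rw [sphere, ball]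
  | succ j => rw [sphere]; exact Finset.sdiff_subset

lemma ball_card (i : ℕ) :
    (ball D v (i + 1)).card = (ball D v i).card + (sphere D v (i + 1)).card := by
  rw [sphere, Finset.card_sdiff_of_subset (ball_mono D v i)]
  have := Finset.card_le_card (ball_mono D v i)
  omega

lemma ball_disc (δ : ℕ) (h2 : ∀ e ∈ D, disc D e.2 ≤ disc D e.1 + (δ : ℤ)) :
    ∀ i, ∀ w ∈ ball D v i, disc D v ≤ disc D w + i * δ := by
  intro i
  induction i with
  | zero => intro w hw; rw [ball, Finset.mem_singleton] at hw; simp [hw]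
  | succ j ih =>
    intro w hw
    rw [ball, Finset.mem_union] at hw
    rcases hw with hw | hw
    · have := ih w hw
      have : (0 : ℤ) ≤ δ := by positivity
      push_cast
      push_cast at ih
      nlinarith [ih w hw]
    · rcases Finset.mem_image.mp hw with ⟨e, he, rfl⟩
      rcases Finset.mem_filter.mp he with ⟨heD, he2⟩
      have h1 := ih e.2 he2
      have h3 := h2 e heD
      push_cast
      push_cast at h1
      linarith

lemma boundary_subset (i : ℕ) :
    D.filter (fun e => e.1 ∉ ball D v i ∧ e.2 ∈ ball D v i)
      ⊆ (sphere D v (i + 1)) ×ˢ (sphere D v i) := by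
  intro e he
  rcases Finset.mem_filter.mp he with ⟨heD, hnot, hin⟩
  have h1 : e.1 ∈ ball D v (i + 1) := by
    rw [ball, Finset.mem_union]
    exact Or.inr (Finset.mem_image.mpr ⟨e, Finset.mem_filter.mpr ⟨heD, hin⟩, rfl⟩)
  rw [Finset.mem_product]
  constructor
  · rw [sphere, Finset.mem_sdiff]; exact ⟨h1, hnot⟩
  · cases i with
    | zero => rw [sphere]; exact hin
    | succ j =>
      rw [sphere, Finset.mem_sdiff]
      refine ⟨hin, fun hcon => hnot ?_⟩
      rw [ball, Finset.mem_union]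
      exact Or.inr (Finset.mem_image.mpr ⟨e, Finset.mem_filter.mpr ⟨heD, hcon⟩, rfl⟩)
end props

lemma discBound {V : Type} [Fintype V] [DecidableEq V] (D : Finset (V × V)) (δ : ℕ)
    (h2 : ∀ e ∈ D, disc D e.2 ≤ disc D e.1 + (δ : ℤ)) (v : V) :
    (disc D v).toNat ^ 3 ≤ 128 * Fintype.card V * δ ^ 2 := by
  set n := Fintype.card V with hn
  set k : ℕ := (disc D v).toNat with hk
  rcases Nat.eq_zero_or_pos k with hk0 | hkpos
  · rw [hk0]; positivity
  have hkZ : (disc D v) = (k : ℤ) := by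
    rw [hk]; exact (Int.toNat_of_nonneg (by omega)).symm
  -- choose m
  set m : ℕ := if δ = 0 then 32 * n else k / (2 * δ) with hm
  have hmδ : 2 * m * δ ≤ k := by
    rcases Nat.eq_zero_or_pos δ with h0 | hδ
    · simp [h0]
    · have : m = k / (2 * δ) := by rw [hm, if_neg (by omega)]
      rw [this]
      have := Nat.div_mul_le_self k (2 * δ)
      calc 2 * (k / (2 * δ)) * δ = (k / (2 * δ)) * (2 * δ) := by ring
      _ ≤ k := Nat.div_mul_le_self k (2 * δ)
  -- sequences
  set s : ℕ → ℕ := fun i => (ball D v i).card with hs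
  set l : ℕ → ℕ := fun i => (sphere D v i).card with hl
  have hs0 : s 0 = 1 := by simp [hs, ball]
  have hl0 : l 0 = 1 := by simp [hl, sphere]
  have hstep : ∀ i, s (i + 1) = s i + l (i + 1) := fun i => ball_card D v i
  have hll : ∀ i, l i ≤ s i := fun i => Finset.card_le_card (sphere_subset D v i)
  have hkey : ∀ i, i ≤ m → k * s i ≤ 2 * (l (i + 1) * l i) := by
    intro i him
    have hd : ∀ w ∈ ball D v i, (k : ℤ) ≤ 2 * disc D w := by
      intro w hw
      have h1 := ball_disc D v δ h2 i w hw
      rw [hkZ] at h1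
      have h2iδ : 2 * i * δ ≤ k := le_trans (by
        have : i ≤ m := him
        exact Nat.mul_le_mul (Nat.mul_le_mul_left 2 this) (le_refl δ)) hmδ
      have : (2 : ℤ) * i * δ ≤ (k : ℤ) := by exact_mod_cast h2iδ
      linarith
    have hsum1 : (k : ℤ) * s i ≤ 2 * ∑ w ∈ ball D v i, disc D w := by
      have : (k : ℤ) * s i = ∑ _w ∈ ball D v i, (k : ℤ) := by
        rw [Finset.sum_const, nsmul_eq_mul, mul_comm]
      rw [this, Finset.mul_sum]
      exact Finset.sum_le_sum hd
    have hsum2 := sum_disc_le D (ball D v i)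
    have hcard : (D.filter (fun e => e.1 ∉ ball D v i ∧ e.2 ∈ ball D v i)).card
        ≤ l (i + 1) * l i := by
      calc _ ≤ ((sphere D v (i + 1)) ×ˢ (sphere D v i)).card :=
            Finset.card_le_card (boundary_subset D v i)
      _ = l (i + 1) * l i := by rw [Finset.card_product]
    have : (k : ℤ) * s i ≤ 2 * (l (i + 1) * l i) := by
      calc (k : ℤ) * s i ≤ 2 * ∑ w ∈ ball D v i, disc D w := hsum1
      _ ≤ 2 * ((D.filter (fun e => e.1 ∉ ball D v i ∧ e.2 ∈ ball D v i)).card : ℤ) := by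
          linarith
      _ ≤ 2 * ((l (i + 1) * l i : ℕ) : ℤ) := by exact_mod_cast by omega
    exact_mod_cast this
  have hgrow := growth s l k m hs0 hl0 hstep hll hkey (m + 1) (le_refl _)
  have hsn : s (m + 1) ≤ n := by
    rw [hs, hn]; exact Finset.card_le_univ _
  have hfinal : k * (m + 1) ^ 2 ≤ 32 * n := le_trans hgrow (by omega)
  rcases Nat.eq_zero_or_pos δ with h0 | hδ
  · exfalso
    have hm' : m = 32 * n := by rw [hm, if_pos h0]
    rw [hm'] at hfinal
    nlinarith
  · have hklt : k < 2 * δ * (m + 1) := by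
      have hm' : m = k / (2 * δ) := by rw [hm, if_neg (by omega)]
      have hmod := Nat.mod_lt k (show 0 < 2 * δ by omega)
      rw [hm']
      calc k = 2 * δ * (k / (2 * δ)) + k % (2 * δ) := (Nat.div_add_mod k (2 * δ)).symm
      _ < 2 * δ * (k / (2 * δ)) + 2 * δ := Nat.add_lt_add_left hmod _
      _ = 2 * δ * (k / (2 * δ) + 1) := by ring
    have A : k ^ 2 ≤ (2 * δ * (m + 1)) ^ 2 := Nat.pow_le_pow_left hklt.le 2
    calc k ^ 3 = k ^ 2 * k := by ring
    _ ≤ (2 * δ * (m + 1)) ^ 2 * k := Nat.mul_le_mul_right k A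
    _ = 4 * δ ^ 2 * (k * (m + 1) ^ 2) := by ring
    _ ≤ 4 * δ ^ 2 * (32 * n) := Nat.mul_le_mul_left _ hfinal
    _ = 128 * n * δ ^ 2 := by ring

lemma disc_swap {V : Type} [DecidableEq V] (D : Finset (V × V)) (w : V) :
    disc (D.image Prod.swap) w = - disc D w := by
  have hin : inDeg (D.image Prod.swap) w = outDeg D w := by
    rw [inDeg, outDeg]
    have : (D.image Prod.swap).filter (fun e => e.2 = w)
        = (D.filter (fun e => e.1 = w)).image Prod.swap := by
      rw [Finset.filter_image]
      rfl
    rw [this, Finset.card_image_of_injective _ Prod.swap_injective]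
  have hout : outDeg (D.image Prod.swap) w = inDeg D w := by
    rw [inDeg, outDeg]
    have : (D.image Prod.swap).filter (fun e => e.1 = w)
        = (D.filter (fun e => e.2 = w)).image Prod.swap := by
      rw [Finset.filter_image]
      rfl
    rw [this, Finset.card_image_of_injective _ Prod.swap_injective]
  rw [disc, disc, hin, hout]
  ring

/-- **Discrepancy of δ-threshold local optima.** In a directed graph on `n` vertices
with no parallel edges, if no directed edge `(u,v)` has `disc v > disc u + δ`, then
every vertex has discrepancy `O(n^{1/3} δ^{2/3})`. -/
theorem stmt18 :
    ∃ C : ℝ, 0 < C ∧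
      ∀ (V : Type) (_ : Fintype V) (_ : DecidableEq V) (D : Finset (V × V)) (δ : ℕ),
        (∀ u w : V, (u, w) ∈ D → (w, u) ∉ D) →
        (∀ e ∈ D, disc D e.2 ≤ disc D e.1 + (δ : ℤ)) →
        ∀ v : V, |(disc D v : ℝ)|
          ≤ C * (Fintype.card V : ℝ) ^ ((1 : ℝ) / 3) * (δ : ℝ) ^ ((2 : ℝ) / 3) := by
  refine ⟨8, by norm_num, ?_⟩
  intro V instF instD D δ h1 h2 v
  set n := Fintype.card V with hn
  have hub := discBound D δ h2 v
  have h2' : ∀ e ∈ D.image Prod.swap,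
      disc (D.image Prod.swap) e.2 ≤ disc (D.image Prod.swap) e.1 + (δ : ℤ) := by
    intro e he
    rcases Finset.mem_image.mp he with ⟨f, hf, rfl⟩
    rw [disc_swap, disc_swap]
    have := h2 f hf
    simp only [Prod.swap] at *
    linarith
  have hlb := discBound (D.image Prod.swap) δ h2' v
  rw [disc_swap] at hlb
  have habs : (disc D v).natAbs ^ 3 ≤ 128 * n * δ ^ 2 := by
    have h3 : (disc D v).natAbs = (disc D v).toNat
        ∨ (disc D v).natAbs = (- disc D v).toNat := by omega
    rcases h3 with h3 | h3 <;> rw [h3] <;> assumption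
  have hxabs : |((disc D v : ℤ) : ℝ)| = (((disc D v).natAbs : ℕ) : ℝ) := by
    rw [Nat.cast_natAbs]
    norm_num
  have hreal : |((disc D v : ℤ) : ℝ)| ^ 3 ≤ 128 * (n : ℝ) * (δ : ℝ) ^ 2 := by
    rw [hxabs]
    exact_mod_cast habs
  set y : ℝ := 8 * (n : ℝ) ^ ((1 : ℝ) / 3) * (δ : ℝ) ^ ((2 : ℝ) / 3) with hy
  have hn3 : ((n : ℝ) ^ ((1 : ℝ) / 3)) ^ (3 : ℕ) = (n : ℝ) := by
    rw [← Real.rpow_natCast ((n : ℝ) ^ ((1 : ℝ) / 3)) 3, ← Real.rpow_mul (by positivity)]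
    norm_num
  have hd3 : ((δ : ℝ) ^ ((2 : ℝ) / 3)) ^ (3 : ℕ) = (δ : ℝ) ^ 2 := by
    rw [← Real.rpow_natCast ((δ : ℝ) ^ ((2 : ℝ) / 3)) 3, ← Real.rpow_mul (by positivity)]
    norm_num
  have hy3 : y ^ 3 = 512 * (n : ℝ) * (δ : ℝ) ^ 2 := by
    rw [hy]
    rw [mul_pow, mul_pow, hn3, hd3]
    ring
  have hynn : 0 ≤ y := by positivity
  have hx3 : |((disc D v : ℤ) : ℝ)| ^ 3 ≤ y ^ 3 := by
    rw [hy3]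
    have : (0 : ℝ) ≤ (n : ℝ) * (δ : ℝ) ^ 2 := by positivity
    nlinarith
  exact le_of_pow_le_pow_left₀ (by norm_num) hynn hx3
end
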